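/- arXiv:2404.13249 — 8 statements merged into one kernel-verified Lean document; each statement's English description precedes it below -/
import Mathlib

section
/- Let C and D be F-linear subspaces of E^n with generator matrices G1 (of size k×n) and G2 (of size l×n). If the pair (C,D) is an ACP of codes (so k + l = nm), then the n×(k+l) matrix over F obtained by juxtaposing Tr(M(π(G1)P)ᵀ) and Tr(M(π(G2)P)ᵀ) has rank n over F. -/
open Finset

/-- The `F`-bilinear form `B(a,b) = Σ_i Tr(μ_i a_i π(b_{σ(i)}))`. -/
noncomputable def Bform (F : Type*) {E : Type*} [Field F] [Field E] [Algebra F E] {n : ℕ}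
    (π : E ≃ₐ[F] E) (σ : Equiv.Perm (Fin n)) (μ : Fin n → E)
    (a b : Fin n → E) : F :=
  ∑ i, Algebra.trace F E (μ i * a i * π (b (σ i)))

/-- The left dual `C^{⊥L}` of an `F`-subspace `C ⊆ E^n`. -/
noncomputable def leftDual (F : Type*) {E : Type*} [Field F] [Field E] [Algebra F E] {n : ℕ}
    (π : E ≃ₐ[F] E) (σ : Equiv.Perm (Fin n)) (μ : Fin n → E)
    (C : Submodule F (Fin n → E)) : Submodule F (Fin n → E) where
  carrier := {a | ∀ c ∈ C, Bform F π σ μ a c = 0}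
  zero_mem' := by
    intro c hc
    simp [Bform]
  add_mem' := by
    intro a b ha hb c hc
    have h1 := ha c hc
    have h2 := hb c hc
    simp only [Bform, Pi.add_apply, mul_add, add_mul, map_add, Finset.sum_add_distrib] at h1 h2 ⊢
    rw [h1, h2, add_zero]
  smul_mem' := by
    intro t a ha c hc
    have h1 := ha c hc
    simp only [Bform] at h1
    simp only [Bform, Pi.smul_apply, mul_smul_comm, smul_mul_assoc, map_smul,
      ← Finset.smul_sum]
    rw [h1, smul_zero]

/-- The right dual `C^{⊥R}` of an `F`-subspace `C ⊆ E^n`. -/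
noncomputable def rightDual (F : Type*) {E : Type*} [Field F] [Field E] [Algebra F E] {n : ℕ}
    (π : E ≃ₐ[F] E) (σ : Equiv.Perm (Fin n)) (μ : Fin n → E)
    (C : Submodule F (Fin n → E)) : Submodule F (Fin n → E) where
  carrier := {a | ∀ c ∈ C, Bform F π σ μ c a = 0}
  zero_mem' := by
    intro c hc
    simp [Bform]
  add_mem' := by
    intro a b ha hb c hc
    have h1 := ha c hc
    have h2 := hb c hc
    simp only [Bform, Pi.add_apply, map_add, mul_add, add_mul, Finset.sum_add_distrib] at h1 h2 ⊢
    rw [h1, h2, add_zero]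
  smul_mem' := by
    intro t a ha c hc
    have h1 := ha c hc
    simp only [Bform] at h1
    simp only [Bform, Pi.smul_apply, map_smul, mul_smul_comm, smul_mul_assoc,
      ← Finset.smul_sum]
    rw [h1, smul_zero]

open Matrix

/-- A pair `(C, D)` of `F`-subspaces of `E^n` is an additive complementary pair (ACP)
of codes if `C ∩ D = {0}` and `C + D = E^n`. -/
def IsACP {F E : Type*} [Field F] [Field E] [Algebra F E] {n : ℕ}
    (C D : Submodule F (Fin n → E)) : Prop :=
  C ⊓ D = ⊥ ∧ C ⊔ D = ⊤

/-- if `(C,D)` is an ACP of codes with generator matrices `G1` (`k×n`) and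
`G2` (`l×n`) (rows forming `F`-bases), then the `n×(k+l)` matrix over `F` obtained by
juxtaposing `Tr(M(π(G1)P)ᵀ)` and `Tr(M(π(G2)P)ᵀ)` has rank `n` over `F`. -/
theorem rank_of_ACP_generator_matrices
    (F E : Type*) [Field F] [Field E] [Algebra F E] [Fintype F] [Fintype E]
    (q m : ℕ) (hq : Fintype.card F = q) (hm : 2 ≤ m) (hE : Fintype.card E = q ^ m)
    (hdeg : Module.finrank F E = m)
    (n : ℕ) (hn : 1 ≤ n)
    (π : E ≃ₐ[F] E) (σ : Equiv.Perm (Fin n)) (μ : Fin n → E) (hμ : ∀ i, μ i ≠ 0)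
    (C D : Submodule F (Fin n → E))
    (k l : ℕ)
    (G1 : Matrix (Fin k) (Fin n) E) (G2 : Matrix (Fin l) (Fin n) E)
    (hG1li : LinearIndependent F (fun i => G1 i))
    (hG1span : Submodule.span F (Set.range fun i => G1 i) = C)
    (hG2li : LinearIndependent F (fun i => G2 i))
    (hG2span : Submodule.span F (Set.range fun i => G2 i) = D)
    (hACP : IsACP C D) :
    (Matrix.fromCols
      ((Matrix.diagonal μ * (G1.map ⇑π * Matrix.of
          (fun i j : Fin n => if i = σ j then (1 : E) else 0))ᵀ).map (Algebra.trace F E))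
      ((Matrix.diagonal μ * (G2.map ⇑π * Matrix.of
          (fun i j : Fin n => if i = σ j then (1 : E) else 0))ᵀ).map (Algebra.trace F E))).rank
      = n := by
  classical
  set P : Matrix (Fin n) (Fin n) E :=
    Matrix.of (fun i j : Fin n => if i = σ j then (1 : E) else 0) with hP
  set H := (Matrix.fromCols
      ((Matrix.diagonal μ * (G1.map ⇑π * P)ᵀ).map (Algebra.trace F E))
      ((Matrix.diagonal μ * (G2.map ⇑π * P)ᵀ).map (Algebra.trace F E))) with hH
  -- entry computations
  have hent1 : ∀ (i : Fin n) (r : Fin k),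
      H i (Sum.inl r) = Algebra.trace F E (μ i * π (G1 r (σ i))) := by
    intro i r
    simp [hH, Matrix.fromCols, Matrix.mul_apply, Matrix.diagonal_apply, hP,
      mul_ite, ite_mul, mul_zero, zero_mul, mul_one, Finset.sum_ite_eq, Finset.sum_ite_eq']
  have hent2 : ∀ (i : Fin n) (r : Fin l),
      H i (Sum.inr r) = Algebra.trace F E (μ i * π (G2 r (σ i))) := by
    intro i r
    simp [hH, Matrix.fromCols, Matrix.mul_apply, Matrix.diagonal_apply, hP,
      mul_ite, ite_mul, mul_zero, zero_mul, mul_one, Finset.sum_ite_eq, Finset.sum_ite_eq']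
  -- rows of H are linearly independent
  have hli : LinearIndependent F (fun i : Fin n => H i) := by
    rw [Fintype.linearIndependent_iff]
    intro g hg i0
    set a : Fin n → E := fun i => algebraMap F E (g i) with ha
    have hB : ∀ c : Fin n → E, Bform F π σ μ a c = 0 := by
      have key1 : ∀ r : Fin k, Bform F π σ μ a (G1 r) = 0 := by
        intro r
        have h0 := congrFun hg (Sum.inl r)
        simp only [Finset.sum_apply, Pi.smul_apply, Pi.zero_apply] at h0
        rw [Bform]
        calc ∑ i, Algebra.trace F E (μ i * a i * π (G1 r (σ i)))
            = ∑ i, g i • H i (Sum.inl r) := by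
              refine Finset.sum_congr rfl fun i _ => ?_
              rw [hent1 i r, ha]
              rw [show μ i * algebraMap F E (g i) * π (G1 r (σ i))
                  = g i • (μ i * π (G1 r (σ i))) by
                rw [Algebra.smul_def]; ring]
              rw [_root_.map_smul]
          _ = 0 := h0
      have key2 : ∀ r : Fin l, Bform F π σ μ a (G2 r) = 0 := by
        intro r
        have h0 := congrFun hg (Sum.inr r)
        simp only [Finset.sum_apply, Pi.smul_apply, Pi.zero_apply] at h0
        rw [Bform]
        calc ∑ i, Algebra.trace F E (μ i * a i * π (G2 r (σ i)))
            = ∑ i, g i • H i (Sum.inr r) := by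
              refine Finset.sum_congr rfl fun i _ => ?_
              rw [hent2 i r, ha]
              rw [show μ i * algebraMap F E (g i) * π (G2 r (σ i))
                  = g i • (μ i * π (G2 r (σ i))) by
                rw [Algebra.smul_def]; ring]
              rw [_root_.map_smul]
          _ = 0 := h0
      have haC : ∀ c ∈ C, Bform F π σ μ a c = 0 := by
        intro c hc
        rw [← hG1span] at hc
        induction hc using Submodule.span_induction with
        | mem x hx =>
          obtain ⟨r, rfl⟩ := hx
          exact key1 r
        | zero => simp [Bform]
        | add x y _ _ hx hy =>
          simp only [Bform, Pi.add_apply, map_add, mul_add, add_mul,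
            Finset.sum_add_distrib] at hx hy ⊢
          rw [hx, hy, add_zero]
        | smul t x _ hx =>
          simp only [Bform] at hx
          simp only [Bform, Pi.smul_apply, _root_.map_smul, mul_smul_comm,
            ← Finset.smul_sum]
          rw [hx, smul_zero]
      have haD : ∀ c ∈ D, Bform F π σ μ a c = 0 := by
        intro c hc
        rw [← hG2span] at hc
        induction hc using Submodule.span_induction with
        | mem x hx =>
          obtain ⟨r, rfl⟩ := hx
          exact key2 r
        | zero => simp [Bform]
        | add x y _ _ hx hy =>
          simp only [Bform, Pi.add_apply, map_add, mul_add, add_mul,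
            Finset.sum_add_distrib] at hx hy ⊢
          rw [hx, hy, add_zero]
        | smul t x _ hx =>
          simp only [Bform] at hx
          simp only [Bform, Pi.smul_apply, _root_.map_smul, mul_smul_comm,
            ← Finset.smul_sum]
          rw [hx, smul_zero]
      intro c
      have hc : c ∈ C ⊔ D := hACP.2 ▸ Submodule.mem_top
      obtain ⟨c1, hc1, c2, hc2, rfl⟩ := Submodule.mem_sup.mp hc
      have e1 := haC c1 hc1
      have e2 := haD c2 hc2
      simp only [Bform, Pi.add_apply, map_add, mul_add, add_mul,
        Finset.sum_add_distrib] at e1 e2 ⊢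
      rw [e1, e2, add_zero]
    -- conclude g i0 = 0 using nondegeneracy of trace form
    have hz : μ i0 * a i0 = 0 := by
      apply (traceForm_nondegenerate F E).1 (μ i0 * a i0)
      intro y
      have h0 := hB (Pi.single (σ i0) (π.symm y) : Fin n → E)
      rw [Bform, Finset.sum_eq_single i0] at h0
      · rw [Algebra.traceForm_apply]
        simpa [mul_assoc] using h0
      · intro j _ hj
        have hs : (Pi.single (σ i0) (π.symm y) : Fin n → E) (σ j) = 0 :=
          Pi.single_eq_of_ne (fun h => hj (σ.injective h)) _
        simp [hs]
      · simp
    have hz2 : a i0 = 0 := by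
      rcases mul_eq_zero.mp hz with h | h
      · exact absurd h (hμ i0)
      · exact h
    exact (map_eq_zero_iff (algebraMap F E) (algebraMap F E).injective).mp hz2
  -- conclude rank = n
  have hr := Matrix.rank_eq_finrank_span_row H
  rw [hH, Matrix.row] at hr
  rw [hr, finrank_span_eq_card hli]
  simp
end

section
/- Let C and D be F-linear subspaces of E^n with parity check matrices H1 (of size (nm−k)×n, where k = dim_F C) and H2 (of size (nm−l)×n, where l = dim_F D). If the pair (C,D) is an ACP of codes, then the n×((nm−k)+(nm−l)) matrix over F obtained by juxtaposing Tr(M(π(H1)P)ᵀ) and Tr(M(π(H2)P)ᵀ) has rank n over F. -/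
open Finset

open Matrix

section Aux

variable (F : Type*) {E : Type*} [Field F] [Field E] [Algebra F E] {n : ℕ}
    (π : E ≃ₐ[F] E) (σ : Equiv.Perm (Fin n)) (μ : Fin n → E)

/-- `Bform` as a bilinear map. -/
noncomputable def BformLin : (Fin n → E) →ₗ[F] (Fin n → E) →ₗ[F] F :=
  LinearMap.mk₂ F (Bform F π σ μ)
    (fun a a' b => by
      simp only [Bform, Pi.add_apply, mul_add, add_mul, map_add, Finset.sum_add_distrib])
    (fun t a b => by
      simp only [Bform, Pi.smul_apply, mul_smul_comm, smul_mul_assoc, _root_.map_smul,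
        ← Finset.smul_sum])
    (fun a b b' => by
      simp only [Bform, Pi.add_apply, map_add, mul_add, Finset.sum_add_distrib])
    (fun t a b => by
      simp only [Bform, Pi.smul_apply, _root_.map_smul, mul_smul_comm, smul_mul_assoc,
        ← Finset.smul_sum])

@[simp] lemma BformLin_apply (a b : Fin n → E) :
    BformLin F π σ μ a b = Bform F π σ μ a b := rfl

lemma mem_leftDual_iff (a : Fin n → E) (W : Submodule F (Fin n → E)) :
    a ∈ leftDual F π σ μ W ↔ W ≤ LinearMap.ker (BformLin F π σ μ a) := by
  constructor
  · intro h c hc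
    simpa [LinearMap.mem_ker] using h c hc
  · intro h c hc
    simpa [LinearMap.mem_ker] using h hc

lemma Bform_right_nondeg [FiniteDimensional F E] [Algebra.IsSeparable F E]
    (hμ : ∀ i, μ i ≠ 0) (b : Fin n → E) (h : ∀ a, Bform F π σ μ a b = 0) : b = 0 := by
  funext j
  by_contra hbj
  have hπ : π (b j) ≠ 0 := fun hz => hbj (by
    have := π.injective (hz.trans (map_zero π).symm)
    simpa using this)
  have hne : μ (σ.symm j) * π (b j) ≠ 0 := mul_ne_zero (hμ _) hπ
  have hexists : ∃ y, Algebra.trace F E (μ (σ.symm j) * π (b j) * y) ≠ 0 := by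
    by_contra hall
    push_neg at hall
    exact hne ((traceForm_nondegenerate F E).1 _ (fun y => by
      rw [Algebra.traceForm_apply]; exact hall y))
  obtain ⟨y, hy⟩ := hexists
  have hb := h (Pi.single (σ.symm j) y)
  rw [Bform, Finset.sum_eq_single (σ.symm j)] at hb
  · simp only [Pi.single_eq_same, Equiv.apply_symm_apply] at hb
    exact hy (by rw [← hb]; congr 1; ring)
  · intro i _ hne'
    simp [Pi.single_eq_of_ne hne']
  · simp

lemma Bform_left_nondeg [FiniteDimensional F E] [Algebra.IsSeparable F E]
    (hμ : ∀ i, μ i ≠ 0) (a : Fin n → E) (h : ∀ b, Bform F π σ μ a b = 0) : a = 0 := by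
  funext j
  by_contra haj
  have hne : μ j * a j ≠ 0 := mul_ne_zero (hμ j) haj
  have hexists : ∃ z, Algebra.trace F E (μ j * a j * z) ≠ 0 := by
    by_contra hall
    push_neg at hall
    exact hne ((traceForm_nondegenerate F E).1 _ (fun z => by
      rw [Algebra.traceForm_apply]; exact hall z))
  obtain ⟨z, hz⟩ := hexists
  have hb := h (Pi.single (σ j) (π.symm z))
  rw [Bform, Finset.sum_eq_single j] at hb
  · simp only [Pi.single_eq_same, AlgEquiv.apply_symm_apply] at hb
    exact hz hb
  · intro i _ hne'
    have hne2 : σ i ≠ σ j := fun hcon => hne' (σ.injective hcon)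
    simp [Pi.single_eq_of_ne hne2]
  · simp

lemma leftDual_top [FiniteDimensional F E] [Algebra.IsSeparable F E]
    (hμ : ∀ i, μ i ≠ 0) :
    leftDual F π σ μ (⊤ : Submodule F (Fin n → E)) = ⊥ := by
  ext a
  simp only [Submodule.mem_bot]
  constructor
  · intro h
    exact Bform_left_nondeg F π σ μ hμ a (fun b => h b Submodule.mem_top)
  · rintro rfl
    intro c _
    simp [Bform]

lemma leftDual_inf (W1 W2 : Submodule F (Fin n → E)) :
    leftDual F π σ μ W1 ⊓ leftDual F π σ μ W2 = leftDual F π σ μ (W1 ⊔ W2) := by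
  ext a
  simp only [Submodule.mem_inf, mem_leftDual_iff, sup_le_iff]

lemma leftDual_eq_dualCoannihilator (W : Submodule F (Fin n → E)) :
    leftDual F π σ μ W = (W.map (BformLin F π σ μ).flip).dualCoannihilator := by
  ext a
  rw [Submodule.mem_dualCoannihilator]
  constructor
  · rintro h _ ⟨c, hc, rfl⟩
    exact h c hc
  · intro h c hc
    exact h _ ⟨c, hc, rfl⟩

lemma finrank_add_finrank_leftDual [FiniteDimensional F E] [Algebra.IsSeparable F E]
    (hμ : ∀ i, μ i ≠ 0) (W : Submodule F (Fin n → E)) :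
    Module.finrank F W + Module.finrank F (leftDual F π σ μ W)
      = Module.finrank F (Fin n → E) := by
  rw [leftDual_eq_dualCoannihilator]
  have hinj : Function.Injective (BformLin F π σ μ).flip := by
    rw [← LinearMap.ker_eq_bot, LinearMap.ker_eq_bot']
    intro b hb
    refine Bform_right_nondeg F π σ μ hμ b (fun a => ?_)
    have := DFunLike.congr_fun hb a
    simpa using this
  have h1 := Subspace.finrank_add_finrank_dualCoannihilator_eq
    (K := F) (V := Fin n → E) (W.map (BformLin F π σ μ).flip)
  have h2 : Module.finrank F W = Module.finrank F (W.map (BformLin F π σ μ).flip) :=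
    LinearEquiv.finrank_eq (Submodule.equivMapOfInjective _ hinj W)
  rw [h2]
  exact h1

lemma mulVec_transpose_eq {ι : Type*} [Fintype ι] (H : Matrix ι (Fin n) E)
    (v : Fin n → F) (i : ι) :
    ((((Matrix.diagonal μ) * (H.map ⇑π * Matrix.of
        (fun i j : Fin n => if i = σ j then (1 : E) else 0))ᵀ).map (Algebra.trace F E))ᵀ *ᵥ v) i
      = Bform F π σ μ (fun j => algebraMap F E (v j)) (H i) := by
  have hP : ∀ j, (H.map ⇑π * Matrix.of
      (fun i j : Fin n => if i = σ j then (1 : E) else 0)) i j = π (H i (σ j)) := by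
    intro j
    simp only [Matrix.mul_apply, Matrix.map_apply, Matrix.of_apply, mul_ite, mul_one, mul_zero]
    rw [Finset.sum_ite_eq' Finset.univ (σ j) (fun s => π (H i s))]
    simp
  simp only [Matrix.mulVec, dotProduct, Matrix.transpose_apply, Matrix.map_apply, Bform]
  refine Finset.sum_congr rfl fun j _ => ?_
  beta_reduce
  rw [Matrix.mul_apply]
  have hdiag : ∀ t, Matrix.diagonal μ j t *
      (H.map ⇑π * Matrix.of (fun i j : Fin n => if i = σ j then (1 : E) else 0))ᵀ t i
      = if t = j then μ j * π (H i (σ j)) else 0 := by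
    intro t
    rcases eq_or_ne t j with rfl | ht
    · simp [Matrix.transpose_apply, hP]
    · simp [Matrix.diagonal_apply_ne' _ ht, ht]
  rw [Finset.sum_congr rfl fun t _ => hdiag t, Finset.sum_ite_eq' Finset.univ j
    (fun _ => μ j * π (H i (σ j)))]
  simp only [Finset.mem_univ, if_true]
  rw [mul_comm, ← smul_eq_mul, ← _root_.map_smul, Algebra.smul_def]
  congr 1
  ring

end Aux

/-- if `(C,D)` is an ACP of codes with parity check matrices `H1`
(`(nm−k)×n`, a generator matrix of the left dual of `C`, where `k = dim_F C`) and `H2`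
(`(nm−l)×n`, a generator matrix of the left dual of `D`, where `l = dim_F D`), then the
`n×((nm−k)+(nm−l))` matrix over `F` obtained by juxtaposing `Tr(M(π(H1)P)ᵀ)` and
`Tr(M(π(H2)P)ᵀ)` has rank `n` over `F`. -/
theorem rank_of_ACP_parity_check_matrices
    (F E : Type*) [Field F] [Field E] [Algebra F E] [Fintype F] [Fintype E]
    (q m : ℕ) (hq : Fintype.card F = q) (hm : 2 ≤ m) (hE : Fintype.card E = q ^ m)
    (hdeg : Module.finrank F E = m)
    (n : ℕ) (hn : 1 ≤ n)
    (π : E ≃ₐ[F] E) (σ : Equiv.Perm (Fin n)) (μ : Fin n → E) (hμ : ∀ i, μ i ≠ 0)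
    (C D : Submodule F (Fin n → E))
    (k l : ℕ) (hk : Module.finrank F C = k) (hl : Module.finrank F D = l)
    (H1 : Matrix (Fin (n * m - k)) (Fin n) E) (H2 : Matrix (Fin (n * m - l)) (Fin n) E)
    (hH1li : LinearIndependent F (fun i => H1 i))
    (hH1span : Submodule.span F (Set.range fun i => H1 i) = leftDual F π σ μ C)
    (hH2li : LinearIndependent F (fun i => H2 i))
    (hH2span : Submodule.span F (Set.range fun i => H2 i) = leftDual F π σ μ D)
    (hACP : IsACP C D) :
    (Matrix.fromCols
      ((Matrix.diagonal μ * (H1.map ⇑π * Matrix.of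
          (fun i j : Fin n => if i = σ j then (1 : E) else 0))ᵀ).map (Algebra.trace F E))
      ((Matrix.diagonal μ * (H2.map ⇑π * Matrix.of
          (fun i j : Fin n => if i = σ j then (1 : E) else 0))ᵀ).map (Algebra.trace F E))).rank
      = n := by
  classical
  haveI : FiniteDimensional F E := FiniteDimensional.of_finrank_pos (by rw [hdeg]; omega)
  haveI : Algebra.IsSeparable F E := inferInstance
  obtain ⟨hInf, hSup⟩ := hACP
  have hC := finrank_add_finrank_leftDual F π σ μ hμ C
  have hD := finrank_add_finrank_leftDual F π σ μ hμ D
  have hkl : Module.finrank F C + Module.finrank F D = Module.finrank F (Fin n → E) := by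
    have h := Submodule.finrank_sup_add_finrank_inf_eq C D
    rw [hSup, hInf] at h
    simpa [finrank_top, finrank_bot] using h.symm
  have hinfdual : leftDual F π σ μ C ⊓ leftDual F π σ μ D = ⊥ := by
    rw [leftDual_inf, hSup, leftDual_top F π σ μ hμ]
  have hsupdual : leftDual F π σ μ C ⊔ leftDual F π σ μ D = ⊤ := by
    apply Submodule.eq_top_of_finrank_eq
    have h2 := Submodule.finrank_sup_add_finrank_inf_eq
      (leftDual F π σ μ C) (leftDual F π σ μ D)
    rw [hinfdual, finrank_bot, add_zero] at h2
    omega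
  have hddual : leftDual F π σ μ (leftDual F π σ μ C)
      ⊓ leftDual F π σ μ (leftDual F π σ μ D) = ⊥ := by
    rw [leftDual_inf, hsupdual, leftDual_top F π σ μ hμ]
  set A1 := ((Matrix.diagonal μ * (H1.map ⇑π * Matrix.of
      (fun i j : Fin n => if i = σ j then (1 : E) else 0))ᵀ).map (Algebra.trace F E)) with hA1
  set A2 := ((Matrix.diagonal μ * (H2.map ⇑π * Matrix.of
      (fun i j : Fin n => if i = σ j then (1 : E) else 0))ᵀ).map (Algebra.trace F E)) with hA2
  have key : ∀ v : Fin n → F, A1ᵀ *ᵥ v = 0 → A2ᵀ *ᵥ v = 0 → v = 0 := by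
    intro v h1 h2
    set v' : Fin n → E := fun j => algebraMap F E (v j) with hv'
    have hmem1 : v' ∈ leftDual F π σ μ (leftDual F π σ μ C) := by
      rw [mem_leftDual_iff, ← hH1span, Submodule.span_le]
      rintro _ ⟨i, rfl⟩
      rw [SetLike.mem_coe, LinearMap.mem_ker]
      have h := congrFun h1 i
      rw [hA1, mulVec_transpose_eq] at h
      simpa [hv'] using h
    have hmem2 : v' ∈ leftDual F π σ μ (leftDual F π σ μ D) := by
      rw [mem_leftDual_iff, ← hH2span, Submodule.span_le]
      rintro _ ⟨i, rfl⟩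
      rw [SetLike.mem_coe, LinearMap.mem_ker]
      have h := congrFun h2 i
      rw [hA2, mulVec_transpose_eq] at h
      simpa [hv'] using h
    have hv0 : v' = 0 := by
      have hmem : v' ∈ (⊥ : Submodule F (Fin n → E)) :=
        hddual ▸ Submodule.mem_inf.mpr ⟨hmem1, hmem2⟩
      simpa using hmem
    funext j
    have hj := congrFun hv0 j
    exact (algebraMap F E).injective (by simpa [hv'] using hj)
  rw [← Matrix.rank_transpose, Matrix.transpose_fromCols]
  have hinj : Function.Injective (Matrix.fromRows A1ᵀ A2ᵀ).mulVecLin := by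
    rw [← LinearMap.ker_eq_bot, LinearMap.ker_eq_bot']
    intro v hv
    rw [Matrix.mulVecLin_apply, Matrix.fromRows_mulVec] at hv
    exact key v (funext fun i => congrFun hv (Sum.inl i))
      (funext fun i => congrFun hv (Sum.inr i))
  rw [Matrix.rank, LinearMap.finrank_range_of_inj hinj,
    Module.finrank_fintype_fun_eq_card, Fintype.card_fin]
end

section
/- Let C and D be F-linear subspaces of E^n with dim_F(C) + dim_F(D) = nm, with generator matrices G1 (k×n, k = dim_F C) and G2 ((nm−k)×n), and parity check matrices H1 of C and H2 of D. Then the pair (C,D) is an ACP of codes if and only if the k×k matrix Tr(H2 M (π(G1)P)ᵀ) over F has rank k and the (nm−k)×(nm−k) matrix Tr(H1 M (π(G2)P)ᵀ) over F has rank nm−k. -/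
open Finset

open Matrix

section Abstract

open Matrix Module Submodule

variable {F V : Type*} [Field F] [AddCommGroup V] [Module F V] [FiniteDimensional F V]

lemma aux_ortho_finrank (B : V →ₗ[F] V →ₗ[F] F) (hB : Function.Injective B.flip)
    (S : Submodule F V) :
    finrank F (Submodule.comap B.flip S.dualAnnihilator) + finrank F S = finrank F V := by
  have hsurj : Function.Surjective B.flip :=
    (LinearMap.injective_iff_surjective_of_finrank_eq_finrank
      (Subspace.dual_finrank_eq (K := F) (V := V)).symm).mp hB
  let e : V ≃ₗ[F] Module.Dual F V := LinearEquiv.ofBijective B.flip ⟨hB, hsurj⟩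
  have h1 : finrank F (Submodule.comap B.flip S.dualAnnihilator)
      = finrank F S.dualAnnihilator := by
    have h0 : Submodule.comap B.flip S.dualAnnihilator
        = Submodule.comap (e : V →ₗ[F] Module.Dual F V) S.dualAnnihilator := rfl
    rw [h0, Submodule.comap_equiv_eq_map_symm]
    exact LinearEquiv.finrank_map_eq e.symm _
  have h2 : finrank F S.dualAnnihilator = finrank F (V ⧸ S) :=
    (LinearEquiv.finrank_eq (Subspace.quotEquivAnnihilator S)).symm
  rw [h1, h2, Submodule.finrank_quotient_add_finrank]

lemma aux_rank (B : V →ₗ[F] V →ₗ[F] F) {a b : ℕ} (H : Fin a → V) (G : Fin b → V)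
    (A : Matrix (Fin a) (Fin b) F) (hA : ∀ i j, A i j = B (H i) (G j))
    (W D' : Submodule F V) (hW : Submodule.span F (Set.range G) = W)
    (hker : ∀ x, (∀ i, B (H i) x = 0) ↔ x ∈ D') :
    A.rank + finrank F (W ⊓ D' : Submodule F V) = finrank F W := by
  classical
  let Ψ : V →ₗ[F] (Fin a → F) := LinearMap.pi (fun i => B (H i))
  have hΨker : LinearMap.ker Ψ = D' := by
    ext x
    simp only [LinearMap.mem_ker, Ψ, LinearMap.pi_apply]
    rw [← hker x]
    constructor
    · intro h i; exact congrFun h i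
    · intro h; funext i; exact h i
  have hrank : A.rank = finrank F (Submodule.map Ψ W) := by
    have hT : Aᵀ = fun j => Ψ (G j) := by
      funext j i
      simp [Matrix.transpose_apply, hA i j, Ψ]
    have hspan : Submodule.span F (Set.range Aᵀ) = Submodule.map Ψ W := by
      rw [hT]
      rw [show (Set.range fun j => Ψ (G j)) = ⇑Ψ '' Set.range G from Set.range_comp Ψ G]
      rw [Submodule.span_image, hW]
    rw [Matrix.rank_eq_finrank_span_cols, show Set.range A.col = Set.range Aᵀ from rfl, hspan]
  have hrn := LinearMap.finrank_range_add_finrank_ker (Ψ.comp W.subtype)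
  have hrange : LinearMap.range (Ψ.comp W.subtype) = Submodule.map Ψ W := by
    rw [LinearMap.range_comp, Submodule.range_subtype]
  have hker2 : LinearMap.ker (Ψ.comp W.subtype) = Submodule.comap W.subtype (W ⊓ D') := by
    rw [LinearMap.ker_comp, hΨker, Submodule.comap_inf, Submodule.comap_subtype_self, top_inf_eq]
  have hker3 : finrank F (LinearMap.ker (Ψ.comp W.subtype))
      = finrank F (W ⊓ D' : Submodule F V) := by
    rw [hker2]
    exact LinearEquiv.finrank_eq (Submodule.comapSubtypeEquivOfLe inf_le_left)
  rw [hrange, hker3] at hrn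
  rw [hrank, hrn]

end Abstract


section AuxBform

open Matrix Module

noncomputable def BbilMap (F : Type*) {E : Type*} [Field F] [Field E] [Algebra F E] {n : ℕ}
    (π : E ≃ₐ[F] E) (σ : Equiv.Perm (Fin n)) (μ : Fin n → E) :
    (Fin n → E) →ₗ[F] (Fin n → E) →ₗ[F] F :=
  LinearMap.mk₂ F (Bform F π σ μ)
    (by intro a a' b; simp [Bform, add_mul, mul_add, Finset.sum_add_distrib])
    (by
      intro t a b
      simp only [Bform, Pi.smul_apply, mul_smul_comm, smul_mul_assoc, _root_.map_smul, smul_eq_mul,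
        ← Finset.smul_sum, Finset.mul_sum]
      )
    (by intro a b b'; simp [Bform, mul_add, Finset.sum_add_distrib])
    (by
      intro t a b
      simp only [Bform, Pi.smul_apply, _root_.map_smul, mul_smul_comm, smul_mul_assoc, smul_eq_mul,
        ← Finset.smul_sum, Finset.mul_sum]
      )

@[simp] lemma BbilMap_apply (F : Type*) {E : Type*} [Field F] [Field E] [Algebra F E] {n : ℕ}
    (π : E ≃ₐ[F] E) (σ : Equiv.Perm (Fin n)) (μ : Fin n → E) (a b : Fin n → E) :
    BbilMap F π σ μ a b = Bform F π σ μ a b := rfl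

lemma BbilMap_flip_injective (F : Type*) {E : Type*} [Field F] [Field E] [Algebra F E]
    [Fintype F] [Fintype E] {n : ℕ}
    (π : E ≃ₐ[F] E) (σ : Equiv.Perm (Fin n)) (μ : Fin n → E) (hμ : ∀ i, μ i ≠ 0) :
    Function.Injective (BbilMap F π σ μ).flip := by
  rw [← LinearMap.ker_eq_bot, LinearMap.ker_eq_bot']
  intro b hb
  have hb' : ∀ a, Bform F π σ μ a b = 0 := by
    intro a
    have := LinearMap.congr_fun hb a
    simpa using this
  have key : ∀ l : Fin n, b (σ l) = 0 := by
    intro l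
    have hx : ∀ x : E, Algebra.trace F E ((μ l * π (b (σ l))) * x) = 0 := by
      intro x
      have := hb' (Pi.single l x)
      simp only [Bform, Pi.single_apply] at this
      rw [Finset.sum_eq_single l] at this
      · rw [if_pos rfl] at this
        rw [← this]
        ring_nf
      · intro i _ hi
        rw [if_neg hi]
        simp
      · simp
    have hc : μ l * π (b (σ l)) = 0 :=
      (traceForm_nondegenerate F E).1 _ (fun x => by
        simpa [Algebra.traceForm_apply] using hx x)
    have : π (b (σ l)) = 0 := by
      rcases mul_eq_zero.mp hc with h | h
      · exact absurd h (hμ l)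
      · exact h
    have := congrArg π.symm this
    simpa using this
  funext j
  have := key (σ.symm j)
  simpa using this


lemma mem_leftDual_iff_s8 {F E : Type*} [Field F] [Field E] [Algebra F E] {n : ℕ}
    (π : E ≃ₐ[F] E) (σ : Equiv.Perm (Fin n)) (μ : Fin n → E)
    (C : Submodule F (Fin n → E)) (a : Fin n → E) :
    a ∈ leftDual F π σ μ C ↔ ∀ c ∈ C, Bform F π σ μ a c = 0 := Iff.rfl

lemma entry_eq {F E : Type*} [Field F] [Field E] [Algebra F E] {n a b : ℕ}
    (π : E ≃ₐ[F] E) (σ : Equiv.Perm (Fin n)) (μ : Fin n → E)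
    (H : Matrix (Fin a) (Fin n) E) (G : Matrix (Fin b) (Fin n) E) (i : Fin a) (j : Fin b) :
    ((H * Matrix.diagonal μ * (G.map ⇑π * Matrix.of
        (fun i j : Fin n => if i = σ j then (1 : E) else 0))ᵀ).map
          (Algebra.trace F E)) i j = Bform F π σ μ (H i) (G j) := by
  classical
  simp only [Matrix.map_apply, Matrix.mul_apply, Matrix.diagonal_apply, Matrix.transpose_apply,
    ite_mul, zero_mul,
    Matrix.of_apply, mul_ite, mul_one, mul_zero, Finset.sum_ite_eq', Finset.mem_univ, if_true,
    Bform]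
  rw [map_sum]
  apply Finset.sum_congr rfl
  intro l _
  rw [mul_comm (μ l) (H i l)]

end AuxBform

/-- Let `C`, `D` be `F`-subspaces of `E^n` with `dim_F C + dim_F D = nm`,
generator matrices `G1` (`k×n`, `k = dim_F C`) and `G2` (`(nm−k)×n`), and parity check
matrices `H1` of `C` (a generator matrix of the left dual of `C`, `(nm−k)×n`) and `H2`
of `D` (`k×n`). Then `(C,D)` is an ACP of codes iff `Tr(H2 M (π(G1)P)ᵀ)` has rank `k`
and `Tr(H1 M (π(G2)P)ᵀ)` has rank `nm − k` over `F`. -/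
theorem isACP_iff_rank
    (F E : Type*) [Field F] [Field E] [Algebra F E] [Fintype F] [Fintype E]
    (q m : ℕ) (hq : Fintype.card F = q) (hm : 2 ≤ m) (hE : Fintype.card E = q ^ m)
    (hdeg : Module.finrank F E = m)
    (n : ℕ) (hn : 1 ≤ n)
    (π : E ≃ₐ[F] E) (σ : Equiv.Perm (Fin n)) (μ : Fin n → E) (hμ : ∀ i, μ i ≠ 0)
    (C D : Submodule F (Fin n → E))
    (k : ℕ) (hk : Module.finrank F C = k)
    (hsum : Module.finrank F C + Module.finrank F D = n * m)
    (G1 : Matrix (Fin k) (Fin n) E) (G2 : Matrix (Fin (n * m - k)) (Fin n) E)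
    (hG1li : LinearIndependent F (fun i => G1 i))
    (hG1span : Submodule.span F (Set.range fun i => G1 i) = C)
    (hG2li : LinearIndependent F (fun i => G2 i))
    (hG2span : Submodule.span F (Set.range fun i => G2 i) = D)
    (H1 : Matrix (Fin (n * m - k)) (Fin n) E) (H2 : Matrix (Fin k) (Fin n) E)
    (hH1li : LinearIndependent F (fun i => H1 i))
    (hH1span : Submodule.span F (Set.range fun i => H1 i) = leftDual F π σ μ C)
    (hH2li : LinearIndependent F (fun i => H2 i))
    (hH2span : Submodule.span F (Set.range fun i => H2 i) = leftDual F π σ μ D) :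
    IsACP C D ↔
      ((H2 * Matrix.diagonal μ * (G1.map ⇑π * Matrix.of
          (fun i j : Fin n => if i = σ j then (1 : E) else 0))ᵀ).map
            (Algebra.trace F E)).rank = k ∧
      ((H1 * Matrix.diagonal μ * (G2.map ⇑π * Matrix.of
          (fun i j : Fin n => if i = σ j then (1 : E) else 0))ᵀ).map
            (Algebra.trace F E)).rank = n * m - k := by
    classical
  have hV : Module.finrank F (Fin n → E) = n * m := by
    rw [Module.finrank_pi_fintype]
    simp [hdeg, Finset.sum_const, mul_comm]
  set B := BbilMap F π σ μ with hBdef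
  have hBinj : Function.Injective B.flip := BbilMap_flip_injective F π σ μ hμ
  rw [hk] at hsum
  have hkle : k ≤ n * m := by omega
  have hDrank : Module.finrank F D = n * m - k := by omega
  have hLD_D : Module.finrank F (leftDual F π σ μ D) = k := by
    rw [← hH2span, finrank_span_eq_card hH2li, Fintype.card_fin]
  have hLD_C : Module.finrank F (leftDual F π σ μ C) = n * m - k := by
    rw [← hH1span, finrank_span_eq_card hH1li, Fintype.card_fin]
  have hmem : ∀ (S : Submodule F (Fin n → E)) (x : Fin n → E),
      x ∈ Submodule.comap B.flip S.dualAnnihilator ↔ ∀ s ∈ S, Bform F π σ μ s x = 0 := by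
    intro S x
    simp only [Submodule.mem_comap, Submodule.mem_dualAnnihilator, LinearMap.flip_apply]
    exact Iff.rfl
  have key : ∀ (X : Submodule F (Fin n → E)),
      Module.finrank F X + Module.finrank F (leftDual F π σ μ X) = n * m →
      Submodule.comap B.flip (leftDual F π σ μ X).dualAnnihilator = X := by
    intro X hX
    have hle : X ≤ Submodule.comap B.flip (leftDual F π σ μ X).dualAnnihilator := by
      intro x hx
      rw [hmem]
      intro s hs
      exact hs x hx
    have hfr := aux_ortho_finrank B hBinj (leftDual F π σ μ X)
    rw [hV] at hfr
    exact (Submodule.eq_of_le_of_finrank_le hle (by omega)).symm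
  have hRD_D : Submodule.comap B.flip (leftDual F π σ μ D).dualAnnihilator = D :=
    key D (by rw [hDrank, hLD_D]; omega)
  have hRD_C : Submodule.comap B.flip (leftDual F π σ μ C).dualAnnihilator = C :=
    key C (by rw [hk, hLD_C]; omega)
  have hkerGen : ∀ {a : ℕ} (H : Fin a → (Fin n → E)) (X : Submodule F (Fin n → E)),
      Submodule.span F (Set.range H) = leftDual F π σ μ X →
      Submodule.comap B.flip (leftDual F π σ μ X).dualAnnihilator = X →
      ∀ x, (∀ i, B (H i) x = 0) ↔ x ∈ X := by
    intro a H X hspan hRD x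
    constructor
    · intro h
      rw [← hRD, hmem]
      intro s hs
      have hsle : Submodule.span F (Set.range H) ≤ LinearMap.ker (B.flip x) := by
        rw [Submodule.span_le]
        rintro _ ⟨i, rfl⟩
        simpa [LinearMap.mem_ker, LinearMap.flip_apply] using h i
      rw [← hspan] at hs
      have := hsle hs
      simpa [LinearMap.mem_ker, LinearMap.flip_apply, hBdef] using this
    · intro hx i
      have hHi : H i ∈ leftDual F π σ μ X := by
        rw [← hspan]; exact Submodule.subset_span ⟨i, rfl⟩
      exact hHi x hx
  have r1 := aux_rank B (fun i => H2 i) (fun j => G1 j)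
    ((H2 * Matrix.diagonal μ * (G1.map ⇑π * Matrix.of
        (fun i j : Fin n => if i = σ j then (1 : E) else 0))ᵀ).map (Algebra.trace F E))
    (fun i j => entry_eq π σ μ H2 G1 i j) C D hG1span
    (hkerGen (fun i => H2 i) D hH2span hRD_D)
  have r2 := aux_rank B (fun i => H1 i) (fun j => G2 j)
    ((H1 * Matrix.diagonal μ * (G2.map ⇑π * Matrix.of
        (fun i j : Fin n => if i = σ j then (1 : E) else 0))ᵀ).map (Algebra.trace F E))
    (fun i j => entry_eq π σ μ H1 G2 i j) D C hG2span
    (hkerGen (fun i => H1 i) C hH1span hRD_C)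
  rw [hk] at r1
  rw [hDrank] at r2
  have hic : (D ⊓ C : Submodule F (Fin n → E)) = C ⊓ D := inf_comm D C
  rw [hic] at r2
  constructor
  · rintro ⟨hinf, hsup⟩
    have h0 : Module.finrank F (C ⊓ D : Submodule F (Fin n → E)) = 0 := by
      rw [hinf]; exact finrank_bot F _
    constructor <;> omega
  · rintro ⟨h1, h2⟩
    have h0 : Module.finrank F (C ⊓ D : Submodule F (Fin n → E)) = 0 := by omega
    have hbot : C ⊓ D = ⊥ := Submodule.finrank_eq_zero.mp h0
    refine ⟨hbot, ?_⟩
    have hsi := Submodule.finrank_sup_add_finrank_inf_eq C D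
    rw [hbot, finrank_bot] at hsi
    apply Submodule.eq_top_of_finrank_eq
    rw [hV, hk] at *
    omega
end

section
/- Let C̃ and D̃ be E-linear codes of length n over E with dim_E(C̃) + dim_E(D̃) = n, with generator matrices G̃1 (k×n, k = dim_E C̃) and G̃2 ((n−k)×n), and parity check matrices H̃1 of C̃ and H̃2 of D̃ (with respect to B̃). Then the following are equivalent: (1) the pair (C̃,D̃) is an LCP of codes; (2) the n×n matrix M·A·P over E is invertible, where A is the n×n matrix obtained by stacking π(G̃1) on top of π(G̃2); (3) the k×k matrix H̃2 M (π(G̃1)P)ᵀ has rank k and the (n−k)×(n−k) matrix H̃1 M (π(G̃2)P)ᵀ has rank n−k over E. -/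
open Finset Matrix

/-- The form `B̃(a,b) = Σ_i μ_i a_i π(b_{σ(i)})` on `E^n`. -/
def Btilde {E : Type*} [Field E] {n : ℕ}
    (π : E ≃+* E) (σ : Equiv.Perm (Fin n)) (μ : Fin n → E)
    (a b : Fin n → E) : E :=
  ∑ i, μ i * a i * π (b (σ i))

/-- The left dual `C̃^{⊥L}` of a linear code `C̃ ⊆ E^n` with respect to `B̃`. -/
def leftDualE {E : Type*} [Field E] {n : ℕ}
    (π : E ≃+* E) (σ : Equiv.Perm (Fin n)) (μ : Fin n → E)
    (C : Submodule E (Fin n → E)) : Submodule E (Fin n → E) where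
  carrier := {a | ∀ c ∈ C, Btilde π σ μ a c = 0}
  zero_mem' := by
    intro c hc
    simp [Btilde]
  add_mem' := by
    intro a b ha hb c hc
    have h1 := ha c hc
    have h2 := hb c hc
    simp only [Btilde, Pi.add_apply, mul_add, add_mul, Finset.sum_add_distrib] at h1 h2 ⊢
    rw [h1, h2, add_zero]
  smul_mem' := by
    intro t a ha c hc
    have h1 := ha c hc
    simp only [Btilde] at h1
    simp only [Btilde, Pi.smul_apply, smul_eq_mul]
    have : ∀ i, μ i * (t * a i) * π (c (σ i)) = t * (μ i * a i * π (c (σ i))) := by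
      intro i; ring
    simp only [this, ← Finset.mul_sum, h1, mul_zero]

/-- A pair of linear codes over `E` is a linear complementary pair (LCP) of codes if
`C̃ ∩ D̃ = {0}` and `C̃ + D̃ = E^n`. -/
def IsLCP {E : Type*} [Field E] {n : ℕ} (C D : Submodule E (Fin n → E)) : Prop :=
  C ⊓ D = ⊥ ∧ C ⊔ D = ⊤

section Aux
variable {E : Type*} [Field E] {n : ℕ}

def Pmat (σ : Equiv.Perm (Fin n)) : Matrix (Fin n) (Fin n) E :=
  Matrix.of (fun i j : Fin n => if i = σ j then (1 : E) else 0)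

noncomputable def auxMat (π : E ≃+* E) (σ : Equiv.Perm (Fin n)) (μ : Fin n → E)
    {r : ℕ} (H : Matrix (Fin r) (Fin n) E) : Matrix (Fin r) (Fin n) E :=
  Matrix.of fun i t => π.symm (μ (σ.symm t) * H i (σ.symm t))

lemma btilde_eq_pi_mulVec (π : E ≃+* E) (σ : Equiv.Perm (Fin n)) (μ : Fin n → E)
    {r : ℕ} (H : Matrix (Fin r) (Fin n) E) (c : Fin n → E) (i : Fin r) :
    Btilde π σ μ (H i) c = π ((auxMat π σ μ H *ᵥ c) i) := by
  simp only [auxMat, Matrix.mulVec, dotProduct, Matrix.of_apply, map_sum, Btilde]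
  rw [← Equiv.sum_comp σ (fun t => π (π.symm (μ (σ.symm t) * H i (σ.symm t)) * c t))]
  refine Finset.sum_congr rfl fun s _ => ?_
  simp [_root_.map_mul, mul_assoc]

lemma auxMat_rows_li (π : E ≃+* E) (σ : Equiv.Perm (Fin n)) (μ : Fin n → E)
    (hμ : ∀ i, μ i ≠ 0) {r : ℕ} {H : Matrix (Fin r) (Fin n) E}
    (hH : LinearIndependent E (fun i => H i)) :
    LinearIndependent E (fun i => auxMat π σ μ H i) := by
  rw [Fintype.linearIndependent_iff] at hH ⊢
  intro g hg j
  have key : ∀ i, π (g i) = 0 := by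
    intro i
    refine hH (fun i => π (g i)) ?_ i
    funext s
    have h0 := congr_fun hg (σ s)
    simp only [Finset.sum_apply, Pi.smul_apply, auxMat, Matrix.of_apply, smul_eq_mul,
      Equiv.symm_apply_apply, Pi.zero_apply] at h0
    have h1 := congrArg π h0
    simp only [map_sum, _root_.map_mul, RingEquiv.apply_symm_apply, map_zero] at h1
    have h2 : (∑ i, π (g i) * H i s) * μ s = 0 := by
      rw [Finset.sum_mul, ← h1]
      refine Finset.sum_congr rfl fun i _ => ?_
      ring
    have := mul_eq_zero.mp h2
    simpa [Finset.sum_apply, Pi.smul_apply, smul_eq_mul, hμ s] using this.resolve_right (hμ s)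
  have := key j
  simpa using this

lemma finrank_ker_auxMat (π : E ≃+* E) (σ : Equiv.Perm (Fin n)) (μ : Fin n → E)
    (hμ : ∀ i, μ i ≠ 0) {r : ℕ} {H : Matrix (Fin r) (Fin n) E}
    (hH : LinearIndependent E (fun i => H i)) :
    Module.finrank E (LinearMap.ker (auxMat π σ μ H).mulVecLin) = n - r := by
  have h1 := LinearMap.finrank_range_add_finrank_ker (auxMat π σ μ H).mulVecLin
  have h2 : Module.finrank E (LinearMap.range (auxMat π σ μ H).mulVecLin) = r := by
    have := (auxMat_rows_li π σ μ hμ hH).rank_matrix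
    exact this.trans (Fintype.card_fin r)
  rw [h2, Module.finrank_pi] at h1
  simp only [Fintype.card_fin] at h1
  omega

/-- The kernel submodule equals the code `D` itself. -/
lemma kerSub_eq (π : E ≃+* E) (σ : Equiv.Perm (Fin n)) (μ : Fin n → E)
    (hμ : ∀ i, μ i ≠ 0) {r : ℕ} {H : Matrix (Fin r) (Fin n) E}
    (hH : LinearIndependent E (fun i => H i))
    (D : Submodule E (Fin n → E))
    (hdual : ∀ i, H i ∈ leftDualE π σ μ D)
    (hD : Module.finrank E D = n - r) :
    LinearMap.ker (auxMat π σ μ H).mulVecLin = D := by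
  have hmem : ∀ c, c ∈ LinearMap.ker (auxMat π σ μ H).mulVecLin ↔
      ∀ i, Btilde π σ μ (H i) c = 0 := by
    intro c
    rw [LinearMap.mem_ker, Matrix.mulVecLin_apply]
    constructor
    · intro h i
      rw [btilde_eq_pi_mulVec, h]
      simp
    · intro h
      funext i
      have := h i
      rw [btilde_eq_pi_mulVec] at this
      simpa using (by
        have : π ((auxMat π σ μ H *ᵥ c) i) = π 0 := by simpa using this
        exact π.injective this)
  have hle : D ≤ LinearMap.ker (auxMat π σ μ H).mulVecLin := by
    intro c hc
    rw [hmem]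
    exact fun i => hdual i c hc
  refine (Submodule.eq_of_le_of_finrank_le hle ?_).symm
  rw [finrank_ker_auxMat π σ μ hμ hH, hD]

/-- entry computation for the product matrix -/
lemma prod_entry (π : E ≃+* E) (σ : Equiv.Perm (Fin n)) (μ : Fin n → E)
    {r r' : ℕ} (H : Matrix (Fin r) (Fin n) E) (G : Matrix (Fin r') (Fin n) E)
    (i : Fin r) (j : Fin r') :
    ((H * Matrix.diagonal μ * (G.map ⇑π * Pmat σ)ᵀ : Matrix (Fin r) (Fin r') E)) i j = Btilde π σ μ (H i) (G j) := by
  have hGP : ∀ (j : Fin r') (s : Fin n), ((G.map ⇑π * Pmat σ : Matrix (Fin r') (Fin n) E)) j s = π (G j (σ s)) := by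
    intro j s
    exact Matrix.mul_apply.trans (by simp [Pmat, mul_ite])
  rw [Matrix.mul_apply, Btilde]
  refine Finset.sum_congr rfl fun s _ => ?_
  rw [Matrix.transpose_apply, hGP, Matrix.mul_diagonal]
  ring

/-- the rank criterion -/
lemma rank_iff_inf (π : E ≃+* E) (σ : Equiv.Perm (Fin n)) (μ : Fin n → E)
    (hμ : ∀ i, μ i ≠ 0) {r : ℕ}
    (C D : Submodule E (Fin n → E))
    (G : Matrix (Fin r) (Fin n) E)
    (hGli : LinearIndependent E (fun i => G i))
    (hGspan : Submodule.span E (Set.range fun i => G i) = C)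
    (H : Matrix (Fin r) (Fin n) E)
    (hHli : LinearIndependent E (fun i => H i))
    (hdual : ∀ i, H i ∈ leftDualE π σ μ D)
    (hD : Module.finrank E D = n - r) :
    (H * Matrix.diagonal μ * (G.map ⇑π * Pmat σ)ᵀ).rank = r ↔ C ⊓ D = ⊥ := by
  set N : Matrix (Fin r) (Fin r) E := H * Matrix.diagonal μ * (G.map ⇑π * Pmat σ)ᵀ with hN
  have hNij : ∀ (i j : Fin r), N i j = Btilde π σ μ (H i) (G j) := fun i j =>
    prod_entry π σ μ H G i j
  have hker := kerSub_eq π σ μ hμ hHli D hdual hD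
  set cc : (Fin r → E) → (Fin n → E) := fun x => ∑ j, π.symm (x j) • G j with hcc
  have hccC : ∀ x, cc x ∈ C := by
    intro x
    refine Submodule.sum_mem _ fun j _ => Submodule.smul_mem _ _ ?_
    rw [← hGspan]
    exact Submodule.subset_span ⟨j, rfl⟩
  have hNx : ∀ x : Fin r → E, (N *ᵥ x = 0 ↔ cc x ∈ D) := by
    intro x
    have key : auxMat π σ μ H *ᵥ cc x = 0 ↔ ∀ i, Btilde π σ μ (H i) (cc x) = 0 := by
      constructor
      · intro h i
        rw [btilde_eq_pi_mulVec, h]; simp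
      · intro h
        funext i
        have hi := h i
        rw [btilde_eq_pi_mulVec] at hi
        exact π.injective (by simpa using hi)
    have hBt : ∀ i, Btilde π σ μ (H i) (cc x) = (N *ᵥ x) i := by
      intro i
      have hπ : ∀ s : Fin n, π ((cc x) (σ s)) = ∑ j, x j * π (G j (σ s)) := by
        intro s
        simp only [hcc, Finset.sum_apply, Pi.smul_apply, smul_eq_mul, map_sum, _root_.map_mul,
          RingEquiv.apply_symm_apply]
      have hrhs : (N *ᵥ x) i = ∑ j, (∑ s, μ s * H i s * π (G j (σ s))) * x j := by
        simp only [Matrix.mulVec, dotProduct]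
        refine Finset.sum_congr rfl fun j _ => ?_
        rw [hNij i j, Btilde]
      rw [hrhs, Btilde]
      simp only [hπ, Finset.mul_sum, Finset.sum_mul]
      rw [Finset.sum_comm]
      exact Finset.sum_congr rfl fun j _ => Finset.sum_congr rfl fun s _ => by ring
    rw [← hker, LinearMap.mem_ker, Matrix.mulVecLin_apply, key]
    simp only [hBt]
    simp [funext_iff]
  have hrank : N.rank = r ↔ ∀ x : Fin r → E, N *ᵥ x = 0 → x = 0 := by
    have hrn := LinearMap.finrank_range_add_finrank_ker N.mulVecLin
    rw [Module.finrank_pi, Fintype.card_fin] at hrn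
    have hrdef : N.rank = Module.finrank E (LinearMap.range N.mulVecLin) := rfl
    have hker' : (∀ x : Fin r → E, N *ᵥ x = 0 → x = 0) ↔ LinearMap.ker N.mulVecLin = ⊥ := by
      rw [LinearMap.ker_eq_bot']
      simp only [Matrix.mulVecLin_apply]
    rw [hker']
    constructor
    · intro h
      have h0 : Module.finrank E (LinearMap.ker N.mulVecLin) = 0 := by
        rw [hrdef] at h; omega
      exact Submodule.finrank_eq_zero.mp h0
    · intro h
      rw [h, finrank_bot] at hrn
      rw [hrdef]; omega
  rw [hrank]
  constructor
  · intro h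
    rw [eq_bot_iff]
    intro v hv
    obtain ⟨hvC, hvD⟩ := Submodule.mem_inf.mp hv
    rw [← hGspan, Submodule.mem_span_range_iff_exists_fun] at hvC
    obtain ⟨a, ha⟩ := hvC
    have hx : cc (fun j => π (a j)) = v := by
      simp only [hcc, RingEquiv.symm_apply_apply]
      exact ha
    have hz := h (fun j => π (a j)) (by rw [hNx]; rw [hx]; exact hvD)
    have haz : ∀ j, a j = 0 := by
      intro j
      have := congr_fun hz j
      simpa using π.injective (by simpa using this)
    rw [Submodule.mem_bot, ← ha]
    simp [haz]
  · intro h x hx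
    rw [hNx] at hx
    have hmem : cc x ∈ C ⊓ D := ⟨hccC x, hx⟩
    rw [h, Submodule.mem_bot] at hmem
    have := Fintype.linearIndependent_iff.mp hGli (fun j => π.symm (x j)) hmem
    funext j
    have hj := this j
    have : x j = π 0 := by
      rw [← hj]; simp
    simpa using this

lemma pmat_eq_permMatrix (σ : Equiv.Perm (Fin n)) :
    (Pmat σ : Matrix (Fin n) (Fin n) E) = (σ⁻¹ : Equiv.Perm (Fin n)).permMatrix E := by
  ext i j
  simp only [Pmat, Matrix.of_apply, Equiv.Perm.permMatrix, PEquiv.toMatrix_apply,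
    Equiv.toPEquiv_apply, Option.mem_def, Option.some.injEq]
  by_cases h : i = σ j
  · simp [h]
  · have h2 : ¬ (j = σ⁻¹ i) := by
      intro hh
      exact h (by simp [hh])
    have h3 : ¬ ((σ⁻¹ : Equiv.Perm (Fin n)) i = j) := fun hh => h2 hh.symm
    simpa [h] using h3

lemma det_pmat_ne_zero (σ : Equiv.Perm (Fin n)) :
    ((Pmat σ : Matrix (Fin n) (Fin n) E)).det ≠ 0 := by
  rw [pmat_eq_permMatrix, Matrix.det_permutation]
  rcases Int.units_eq_one_or (Equiv.Perm.sign σ⁻¹) with h | h <;> simp [h]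

lemma isUnit_scaled (σ : Equiv.Perm (Fin n)) (μ : Fin n → E) (hμ : ∀ i, μ i ≠ 0)
    (A : Matrix (Fin n) (Fin n) E) :
    IsUnit (Matrix.diagonal μ * A * Pmat σ) ↔ IsUnit A := by
  have hM : (Matrix.diagonal μ).det ≠ 0 := by
    rw [Matrix.det_diagonal]
    exact Finset.prod_ne_zero_iff.mpr fun i _ => hμ i
  rw [Matrix.isUnit_iff_isUnit_det, Matrix.det_mul, Matrix.det_mul,
    Matrix.isUnit_iff_isUnit_det, isUnit_iff_ne_zero, isUnit_iff_ne_zero]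
  constructor
  · intro h hA
    exact h (by rw [hA]; ring)
  · intro h
    exact mul_ne_zero (mul_ne_zero hM h) (det_pmat_ne_zero σ)

lemma isUnit_iff_span_rows (A : Matrix (Fin n) (Fin n) E) :
    IsUnit A ↔ Submodule.span E (Set.range fun i => A i) = ⊤ := by
  rw [← Matrix.vecMul_surjective_iff_isUnit]
  have hr : LinearMap.range A.vecMulLinear = Submodule.span E (Set.range A) :=
    range_vecMulLinear A
  constructor
  · intro hsurj
    rw [← hr]
    exact LinearMap.range_eq_top.mpr fun v => by
      obtain ⟨w, hw⟩ := hsurj v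
      exact ⟨w, hw⟩
  · intro h v
    have hv : v ∈ LinearMap.range A.vecMulLinear := by
      rw [hr]
      rw [show (Set.range A) = Set.range fun i => A i from rfl, h]
      trivial
    obtain ⟨w, hw⟩ := hv
    exact ⟨w, hw⟩

/-- the semilinear map applying π entrywise -/
def piMap (π : E ≃+* E) : (Fin n → E) →ₛₗ[(π : E →+* E)] (Fin n → E) where
  toFun v := fun i => π (v i)
  map_add' := by intro a b; funext i; simp
  map_smul' := by intro t v; funext i; simp [mul_comm]

lemma piMap_injective (π : E ≃+* E) : Function.Injective (piMap (n := n) π) := by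
  intro a b h
  funext i
  exact π.injective (congr_fun h i)

lemma piMap_surjective (π : E ≃+* E) : Function.Surjective (piMap (n := n) π) := by
  intro v
  exact ⟨fun i => π.symm (v i), by funext i; simp [piMap]⟩

lemma map_piMap_eq_top_iff (π : E ≃+* E) (X : Submodule E (Fin n → E)) :
    haveI : RingHomSurjective (π : E →+* E) := ⟨π.surjective⟩
    Submodule.map (piMap π) X = ⊤ ↔ X = ⊤ := by
  haveI : RingHomSurjective (π : E →+* E) := ⟨π.surjective⟩
  have htop : Submodule.map (piMap (n := n) π) ⊤ = ⊤ := by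
    rw [Submodule.map_top, LinearMap.range_eq_top]
    exact piMap_surjective π
  constructor
  · intro h
    exact Submodule.map_injective_of_injective (piMap_injective π) (h.trans htop.symm)
  · intro h
    rw [h, htop]

lemma lcp_iff (C D : Submodule E (Fin n → E))
    (hsum : Module.finrank E C + Module.finrank E D = n) :
    ((C ⊓ D = ⊥ ↔ C ⊔ D = ⊤) ∧
     ((C ⊓ D = ⊥ ∧ C ⊔ D = ⊤) ↔ C ⊓ D = ⊥)) := by
  have key := Submodule.finrank_sup_add_finrank_inf_eq C D
  have htot : Module.finrank E (Fin n → E) = n := by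
    rw [Module.finrank_pi, Fintype.card_fin]
  have h1 : C ⊔ D = ⊤ → C ⊓ D = ⊥ := by
    intro h
    rw [h, finrank_top, htot, hsum] at key
    exact Submodule.finrank_eq_zero.mp (by omega)
  have h2 : C ⊓ D = ⊥ → C ⊔ D = ⊤ := by
    intro h
    rw [h, finrank_bot, hsum] at key
    exact Submodule.eq_top_of_finrank_eq (by omega)
  exact ⟨⟨h2, h1⟩, ⟨fun h => h.1, fun h => ⟨h, h2 h⟩⟩⟩

end Aux

/-- characterization of LCP of codes over `E` with respect to `B̃`:
`(C̃,D̃)` is LCP iff `M·A·P` is invertible (`A` the stack of `π(G̃1)` over `π(G̃2)`),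
iff `H̃2 M (π(G̃1)P)ᵀ` has rank `k` and `H̃1 M (π(G̃2)P)ᵀ` has rank `n−k`. -/
theorem isLCP_tfae
    (F E : Type*) [Field F] [Field E] [Algebra F E] [Fintype F] [Fintype E]
    (q m : ℕ) (hq : Fintype.card F = q) (hm : 2 ≤ m) (hE : Fintype.card E = q ^ m)
    (hdeg : Module.finrank F E = m)
    (n : ℕ) (hn : 1 ≤ n)
    (π : E ≃+* E) (σ : Equiv.Perm (Fin n)) (μ : Fin n → E) (hμ : ∀ i, μ i ≠ 0)
    (Ct Dt : Submodule E (Fin n → E))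
    (k : ℕ) (hk : Module.finrank E Ct = k) (hkn : k ≤ n)
    (hsum : Module.finrank E Ct + Module.finrank E Dt = n)
    (G1 : Matrix (Fin k) (Fin n) E) (G2 : Matrix (Fin (n - k)) (Fin n) E)
    (hG1li : LinearIndependent E (fun i => G1 i))
    (hG1span : Submodule.span E (Set.range fun i => G1 i) = Ct)
    (hG2li : LinearIndependent E (fun i => G2 i))
    (hG2span : Submodule.span E (Set.range fun i => G2 i) = Dt)
    (H1 : Matrix (Fin (n - k)) (Fin n) E) (H2 : Matrix (Fin k) (Fin n) E)
    (hH1li : LinearIndependent E (fun i => H1 i))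
    (hH1span : Submodule.span E (Set.range fun i => H1 i) = leftDualE π σ μ Ct)
    (hH2li : LinearIndependent E (fun i => H2 i))
    (hH2span : Submodule.span E (Set.range fun i => H2 i) = leftDualE π σ μ Dt) :
    (IsLCP Ct Dt ↔
      IsUnit (Matrix.diagonal μ *
        (Matrix.reindex (finSumFinEquiv.trans (finCongr (Nat.add_sub_cancel' hkn)))
          (Equiv.refl (Fin n)) (Matrix.fromRows (G1.map ⇑π) (G2.map ⇑π))) *
        Matrix.of (fun i j : Fin n => if i = σ j then (1 : E) else 0))) ∧
    (IsLCP Ct Dt ↔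
      ((H2 * Matrix.diagonal μ * (G1.map ⇑π * Matrix.of
          (fun i j : Fin n => if i = σ j then (1 : E) else 0))ᵀ).rank = k ∧
       (H1 * Matrix.diagonal μ * (G2.map ⇑π * Matrix.of
          (fun i j : Fin n => if i = σ j then (1 : E) else 0))ᵀ).rank = n - k)) := by
  have hPm : Matrix.of (fun i j : Fin n => if i = σ j then (1 : E) else 0) = Pmat σ := rfl
  rw [hPm]
  have hDt : Module.finrank E Dt = n - k := by omega
  have hCt' : Module.finrank E Ct = n - (n - k) := by omega
  have hlcp := lcp_iff Ct Dt hsum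
  have hLCP_inf : IsLCP Ct Dt ↔ Ct ⊓ Dt = ⊥ :=
    ⟨fun h => h.1, fun h => ⟨h, hlcp.1.mp h⟩⟩
  have hLCP_sup : IsLCP Ct Dt ↔ Ct ⊔ Dt = ⊤ :=
    ⟨fun h => h.2, fun h => ⟨hlcp.1.mpr h, h⟩⟩
  have hdual2 : ∀ i, H2 i ∈ leftDualE π σ μ Dt := by
    intro i
    rw [← hH2span]
    exact Submodule.subset_span ⟨i, rfl⟩
  have hdual1 : ∀ i, H1 i ∈ leftDualE π σ μ Ct := by
    intro i
    rw [← hH1span]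
    exact Submodule.subset_span ⟨i, rfl⟩
  constructor
  · -- first equivalence
    rw [hLCP_sup, isUnit_scaled σ μ hμ, isUnit_iff_span_rows]
    haveI : RingHomSurjective (π : E →+* E) := ⟨π.surjective⟩
    set e := finSumFinEquiv.trans (finCongr (Nat.add_sub_cancel' hkn)) with he
    set B := Matrix.fromRows (G1.map ⇑π) (G2.map ⇑π) with hB
    have hrows : (Set.range fun i => (Matrix.reindex e (Equiv.refl (Fin n)) B) i)
        = ⇑(piMap (n := n) π) '' ((Set.range fun i => G1 i) ∪ (Set.range fun i => G2 i)) := by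
      have h1 : (fun i => (Matrix.reindex e (Equiv.refl (Fin n)) B) i)
          = (fun p => B p) ∘ ⇑e.symm := rfl
      rw [h1, Function.Surjective.range_comp e.symm.surjective]
      have h2 : (fun p => B p) = Sum.elim (fun i => (G1.map ⇑π) i) (fun i => (G2.map ⇑π) i) := by
        funext p
        cases p <;> rfl
      rw [h2, Set.Sum.elim_range, Set.image_union]
      congr 1
      · have : (fun i => (G1.map ⇑π) i) = ⇑(piMap (n := n) π) ∘ (fun i => G1 i) := rfl
        rw [this, Set.range_comp]
      · have : (fun i => (G2.map ⇑π) i) = ⇑(piMap (n := n) π) ∘ (fun i => G2 i) := rfl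
        rw [this, Set.range_comp]
    rw [hrows, Submodule.span_image, Submodule.span_union, hG1span, hG2span,
      map_piMap_eq_top_iff]
  · -- second equivalence
    rw [hLCP_inf]
    have e1 := rank_iff_inf π σ μ hμ Ct Dt G1 hG1li hG1span H2 hH2li hdual2 hDt
    have e2 := rank_iff_inf π σ μ hμ Dt Ct G2 hG2li hG2span H1 hH1li hdual1 hCt'
    rw [inf_comm] at e2
    exact ⟨fun h => ⟨e1.mpr h, e2.mpr h⟩, fun h => e1.mp h.1⟩
end

section
/- Let C̃ be an E-linear code of length n over E of dimension k and D̃ an E-linear code of length n of dimension n−k, and assume at least one of C̃, D̃ is MDS. Then there exists a = (a_1,…,a_n) with all a_i ∈ E nonzero such that the pair (aC̃, D̃), viewed as F-linear subspaces of E^n, is an ACP of codes (equivalently, aC̃ ⊕ D̃ = E^n). -/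
/-- A linear code `C ⊆ E^n` of dimension `k` is MDS if every nonzero codeword has
Hamming weight at least `n − k + 1`. -/
def IsMDS {E : Type*} [Field E] {n : ℕ} (C : Submodule E (Fin n → E)) (k : ℕ) : Prop :=
  Module.finrank E C = k ∧ ∀ c ∈ C, c ≠ 0 → n - k + 1 ≤ Set.ncard {i | c i ≠ 0}

/-- Coordinatewise multiplication by `a ∈ E^n`, as an `E`-linear map `E^n → E^n`;
its image of a code `C̃` is the code `aC̃`. -/
def mulCoord {E : Type*} [Field E] {n : ℕ} (a : Fin n → E) :
    (Fin n → E) →ₗ[E] (Fin n → E) :=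
  LinearMap.pi fun i => a i • LinearMap.proj i

section ACPAux

variable {E : Type*} [Field E] {n : ℕ}

lemma mulCoord_apply (a x : Fin n → E) (i : Fin n) : mulCoord a x i = a i * x i := rfl

/-- Every `r`-dimensional code has an "information set": `r` coordinates on which
the projection is injective; moreover every chosen coordinate is in the support of
some codeword. -/
lemma acp_exists_info_set (r : ℕ) (X : Submodule E (Fin n → E))
    (hX : Module.finrank E X = r) :
    ∃ S : Finset (Fin n), S.card = r ∧ (∀ c ∈ X, (∀ i ∈ S, c i = 0) → c = 0) ∧
      (∀ j ∈ S, ∃ c ∈ X, c j ≠ 0) := by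
  induction r generalizing X with
  | zero =>
    refine ⟨∅, rfl, ?_, by simp⟩
    have hXbot : X = ⊥ := Submodule.finrank_eq_zero.mp hX
    intro c hc _
    rw [hXbot] at hc
    simpa using hc
  | succ r ih =>
    have hX0 : X ≠ ⊥ := by
      intro h
      rw [h] at hX
      simp at hX
    obtain ⟨c, hcX, hc0⟩ := Submodule.exists_mem_ne_zero_of_ne_bot hX0
    obtain ⟨i, hci⟩ : ∃ i, c i ≠ 0 := Function.ne_iff.mp hc0
    let π : X →ₗ[E] E := (LinearMap.proj i).comp X.subtype
    have hsurj : Function.Surjective π := by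
      intro y
      refine ⟨(y * (c i)⁻¹) • ⟨c, hcX⟩, ?_⟩
      show (y * (c i)⁻¹) * c i = y
      field_simp
    have hrank : Module.finrank E (LinearMap.ker π) = r := by
      have h1 := LinearMap.finrank_range_add_finrank_ker π
      rw [LinearMap.range_eq_top.mpr hsurj, finrank_top, Module.finrank_self, hX] at h1
      omega
    have hmem : ∀ x, x ∈ (LinearMap.ker π).map X.subtype ↔ x ∈ X ∧ x i = 0 := by
      intro x
      constructor
      · rintro ⟨⟨y, hy⟩, hk, rfl⟩
        exact ⟨hy, hk⟩
      · rintro ⟨hx, hxi⟩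
        exact ⟨⟨x, hx⟩, hxi, rfl⟩
    have hrank' : Module.finrank E ((LinearMap.ker π).map X.subtype) = r := by
      rw [Submodule.finrank_map_subtype_eq]
      exact hrank
    obtain ⟨S', hcard, hkill, hsupp⟩ := ih _ hrank'
    have hiS' : i ∉ S' := by
      intro hi
      obtain ⟨x, hx, hxi⟩ := hsupp i hi
      exact hxi ((hmem x).mp hx).2
    refine ⟨insert i S', by rw [Finset.card_insert_of_notMem hiS', hcard], ?_, ?_⟩
    · intro x hx hz
      have hxi : x i = 0 := hz i (Finset.mem_insert_self _ _)
      exact hkill x ((hmem x).mpr ⟨hx, hxi⟩) fun j hj => hz j (Finset.mem_insert_of_mem hj)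
    · intro j hj
      rcases Finset.mem_insert.mp hj with rfl | hj
      · exact ⟨c, hcX, hci⟩
      · obtain ⟨x, hx, hxj⟩ := hsupp j hj
        exact ⟨x, ((hmem x).mp hx).1, hxj⟩

/-- For an MDS code, every set of `r` coordinates is an information set. -/
lemma acp_mds_kill {r : ℕ} {X : Submodule E (Fin n → E)} (h : IsMDS X r)
    (S : Finset (Fin n)) (hS : S.card = r) :
    ∀ c ∈ X, (∀ i ∈ S, c i = 0) → c = 0 := by
  intro c hc hz
  by_contra hne
  have h1 := h.2 c hc hne
  have hsub : {i | c i ≠ 0} ⊆ (↑(Sᶜ) : Set (Fin n)) := by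
    intro i hi
    simp only [Finset.coe_compl, Set.mem_compl_iff, Finset.mem_coe]
    intro hiS
    exact hi (hz i hiS)
  have h2 : Set.ncard {i | c i ≠ 0} ≤ (Sᶜ : Finset (Fin n)).card := by
    rw [← Set.ncard_coe_finset]
    exact Set.ncard_le_ncard hsub (Set.toFinite _)
  rw [Finset.card_compl, hS, Fintype.card_fin] at h2
  omega

/-- The square matrix whose rows are the scaled generators of `C̃` followed by the
generators of `D̃`. -/
def acpMat {k d : ℕ} (hkd : k + d = n) (B : Fin k → Fin n → E) (D : Fin d → Fin n → E)
    (a : Fin n → E) : Matrix (Fin n) (Fin n) E :=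
  Matrix.of fun r => Sum.elim (fun j => mulCoord a (B j)) D
    ((finSumFinEquiv.trans (finCongr hkd)).symm r)

lemma acpMat_li_iff {k d : ℕ} (hkd : k + d = n) (B : Fin k → Fin n → E)
    (D : Fin d → Fin n → E) (a : Fin n → E) :
    LinearIndependent E (Sum.elim (fun j => mulCoord a (B j)) D) ↔
      (acpMat hkd B D a).det ≠ 0 := by
  have h1 : LinearIndependent E (fun r => acpMat hkd B D a r) ↔
      LinearIndependent E (Sum.elim (fun j => mulCoord a (B j)) D) :=
    linearIndependent_equiv (finSumFinEquiv.trans (finCongr hkd)).symm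
  rw [← h1]
  change LinearIndependent E (acpMat hkd B D a).row ↔ _
  rw [Matrix.linearIndependent_rows_iff_isUnit, Matrix.isUnit_iff_isUnit_det,
    isUnit_iff_ne_zero]

lemma acpMat_update {k d : ℕ} (hkd : k + d = n) (B : Fin k → Fin n → E)
    (D : Fin d → Fin n → E) (a : Fin n → E) (i : Fin n) (t : E) :
    acpMat hkd B D (Function.update a i t) =
      Matrix.updateCol (acpMat hkd B D a) i
        ((t • fun r => Sum.elim (fun j => B j i) (fun _ => (0 : E))
            ((finSumFinEquiv.trans (finCongr hkd)).symm r)) +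
          fun r => Sum.elim (fun _ => (0 : E)) (fun l => D l i)
            ((finSumFinEquiv.trans (finCongr hkd)).symm r)) := by
  ext r c
  simp only [acpMat, Matrix.updateCol_apply, Matrix.of_apply, Pi.add_apply, Pi.smul_apply,
    smul_eq_mul]
  cases hs : (finSumFinEquiv.trans (finCongr hkd)).symm r with
  | inl j =>
    by_cases hc : c = i
    · subst hc
      simp [mulCoord_apply]
    · simp [hc, mulCoord_apply, Function.update_of_ne hc]
  | inr l =>
    by_cases hc : c = i
    · subst hc
      simp
    · simp [hc]

/-- Key perturbation step: given a scaling making the determinant nonzero, each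
coordinate can be moved to a nonzero value while keeping the determinant nonzero. -/
lemma acp_step [Fintype E] (h3 : 2 < Fintype.card E) {k d : ℕ} (hkd : k + d = n)
    (B : Fin k → Fin n → E) (D : Fin d → Fin n → E) (a : Fin n → E) (i : Fin n)
    (hdet : (acpMat hkd B D a).det ≠ 0) :
    ∃ t : E, t ≠ 0 ∧ (acpMat hkd B D (Function.update a i t)).det ≠ 0 := by
  classical
  set u : Fin n → E := fun r => Sum.elim (fun j => B j i) (fun _ => (0 : E))
    ((finSumFinEquiv.trans (finCongr hkd)).symm r) with hu
  set v : Fin n → E := fun r => Sum.elim (fun _ => (0 : E)) (fun l => D l i)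
    ((finSumFinEquiv.trans (finCongr hkd)).symm r) with hv
  set α := (Matrix.updateCol (acpMat hkd B D a) i u).det with hα
  set β := (Matrix.updateCol (acpMat hkd B D a) i v).det with hβ
  have expand : ∀ t : E, (acpMat hkd B D (Function.update a i t)).det = t * α + β := by
    intro t
    rw [acpMat_update hkd B D a i t, Matrix.det_updateCol_add,
      Matrix.det_updateCol_smul]
  have hai : a i * α + β ≠ 0 := by
    have h1 := expand (a i)
    rw [Function.update_eq_self] at h1
    rw [← h1]
    exact hdet
  by_cases hA : α = 0
  · refine ⟨1, one_ne_zero, ?_⟩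
    rw [expand, hA, mul_zero, zero_add]
    rw [hA, mul_zero, zero_add] at hai
    exact hai
  · obtain ⟨t, ht⟩ : ∃ t : E, t ∉ ({0, -β * α⁻¹} : Finset E) := by
      by_contra hno
      push_neg at hno
      have hsub : (Finset.univ : Finset E) ⊆ {0, -β * α⁻¹} := fun t _ => hno t
      have h1 := Finset.card_le_card hsub
      have h2 : ({0, -β * α⁻¹} : Finset E).card ≤ 2 :=
        (Finset.card_insert_le _ _).trans (by simp)
      rw [Finset.card_univ] at h1
      omega
    simp only [Finset.mem_insert, Finset.mem_singleton, not_or] at ht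
    refine ⟨t, ht.1, ?_⟩
    rw [expand]
    intro h
    apply ht.2
    have h1 : t * α = -β := by
      have := eq_neg_of_add_eq_zero_left h
      exact this
    rw [← h1, mul_assoc, mul_inv_cancel₀ hA, mul_one]

/-- Upgrade one good scaling to a good scaling with all coordinates nonzero. -/
lemma acp_exists_good_scaling [Fintype E] (h3 : 2 < Fintype.card E) {k d : ℕ}
    (hkd : k + d = n) (B : Fin k → Fin n → E) (D : Fin d → Fin n → E) (a0 : Fin n → E)
    (h0 : LinearIndependent E (Sum.elim (fun j => mulCoord a0 (B j)) D)) :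
    ∃ a : Fin n → E, (∀ i, a i ≠ 0) ∧
      LinearIndependent E (Sum.elim (fun j => mulCoord a (B j)) D) := by
  classical
  have main : ∀ s : Finset (Fin n), ∃ a : Fin n → E,
      (∀ i ∈ s, a i ≠ 0) ∧ (acpMat hkd B D a).det ≠ 0 := by
    intro s
    induction s using Finset.induction_on with
    | empty => exact ⟨a0, by simp, (acpMat_li_iff hkd B D a0).mp h0⟩
    | @insert i s hi ih =>
      obtain ⟨a, ha, hdet⟩ := ih
      obtain ⟨t, ht0, hdet'⟩ := acp_step h3 hkd B D a i hdet
      refine ⟨Function.update a i t, ?_, hdet'⟩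
      intro j hj
      rcases Finset.mem_insert.mp hj with rfl | hj
      · simpa using ht0
      · have hji : j ≠ i := fun h => hi (h ▸ hj)
        rw [Function.update_of_ne hji]
        exact ha j hj
  obtain ⟨a, ha, hdet⟩ := main Finset.univ
  exact ⟨a, fun i => ha i (Finset.mem_univ i), (acpMat_li_iff hkd B D a).mpr hdet⟩

end ACPAux

/-- if `C̃` is a `k`-dimensional `E`-linear code of length `n`, `D̃` an
`(n−k)`-dimensional `E`-linear code of length `n`, and at least one of them is MDS, then
there exists `a = (a_1,…,a_n)` with all `a_i ≠ 0` such that `(aC̃, D̃)`, viewed as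
`F`-linear subspaces of `E^n`, is an ACP of codes. -/
theorem exists_scaling_isACP
    (F E : Type*) [Field F] [Field E] [Algebra F E] [Fintype F] [Fintype E]
    (q m : ℕ) (hq : Fintype.card F = q) (hm : 2 ≤ m) (hE : Fintype.card E = q ^ m)
    (hdeg : Module.finrank F E = m)
    (n : ℕ) (hn : 1 ≤ n)
    (Ct Dt : Submodule E (Fin n → E))
    (k : ℕ) (hkn : k ≤ n)
    (hCt : Module.finrank E Ct = k) (hDt : Module.finrank E Dt = n - k)
    (hMDS : IsMDS Ct k ∨ IsMDS Dt (n - k)) :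
    ∃ a : Fin n → E, (∀ i, a i ≠ 0) ∧
      IsACP (Submodule.restrictScalars F (Submodule.map (mulCoord a) Ct))
        (Submodule.restrictScalars F Dt) := by
  classical
  have h3 : 2 < Fintype.card E := by
    have hq2 : 2 ≤ q := by
      rw [← hq]
      exact Fintype.one_lt_card
    have h4 : 2 ^ 2 ≤ q ^ m :=
      (Nat.pow_le_pow_left hq2 2).trans (Nat.pow_le_pow_right (by omega) hm)
    rw [hE]
    omega
  set d : ℕ := n - k with hd
  have hkd : k + d = n := by omega
  -- bases of the two codes as families in E^n
  let bC : Module.Basis (Fin k) E Ct := (Module.finBasis E Ct).reindex (finCongr hCt)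
  let bD : Module.Basis (Fin d) E Dt := (Module.finBasis E Dt).reindex (finCongr (hDt.trans hd.symm))
  let B : Fin k → (Fin n → E) := fun j => (bC j : Fin n → E)
  let D : Fin d → (Fin n → E) := fun l => (bD l : Fin n → E)
  have hBmem : ∀ j, B j ∈ Ct := fun j => (bC j).2
  have hDmem : ∀ l, D l ∈ Dt := fun l => (bD l).2
  have hBli : LinearIndependent E B :=
    bC.linearIndependent.map' Ct.subtype (Submodule.ker_subtype Ct)
  have hDli : LinearIndependent E D :=
    bD.linearIndependent.map' Dt.subtype (Submodule.ker_subtype Dt)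
  have hBspan : Submodule.span E (Set.range B) = Ct := by
    have h1 : Set.range B = Ct.subtype '' Set.range bC := by
      rw [← Set.range_comp]
      rfl
    rw [h1, Submodule.span_image, bC.span_eq, Submodule.map_subtype_top]
  have hDspan : Submodule.span E (Set.range D) = Dt := by
    have h1 : Set.range D = Dt.subtype '' Set.range bD := by
      rw [← Set.range_comp]
      rfl
    rw [h1, Submodule.span_image, bD.span_eq, Submodule.map_subtype_top]
  -- an information-set pair (S, Sᶜ)
  obtain ⟨S, hScard, hkillC, hkillD⟩ :
      ∃ S : Finset (Fin n), S.card = k ∧ (∀ c ∈ Ct, (∀ i ∈ S, c i = 0) → c = 0) ∧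
        (∀ x ∈ Dt, (∀ i ∉ S, x i = 0) → x = 0) := by
    rcases hMDS with hC | hD
    · obtain ⟨T, hTcard, hTkill, -⟩ := acp_exists_info_set d Dt (hDt.trans hd.symm)
      refine ⟨Tᶜ, ?_, ?_, ?_⟩
      · rw [Finset.card_compl, hTcard, Fintype.card_fin]
        omega
      · exact acp_mds_kill hC Tᶜ
          (by rw [Finset.card_compl, hTcard, Fintype.card_fin]; omega)
      · intro x hx hz
        exact hTkill x hx fun i hi => hz i (by simpa using hi)
    · obtain ⟨S, hScard, hSkill, -⟩ := acp_exists_info_set k Ct hCt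
      refine ⟨S, hScard, hSkill, ?_⟩
      intro x hx hz
      exact acp_mds_kill hD Sᶜ
        (by rw [Finset.card_compl, hScard, Fintype.card_fin])
        x hx fun i hi => hz i (by simpa using hi)
  -- the witness scaling
  set a0 : Fin n → E := fun i => if i ∈ S then (1 : E) else 0 with ha0
  have h0 : LinearIndependent E (Sum.elim (fun j => mulCoord a0 (B j)) D) := by
    rw [linearIndependent_sum]
    refine ⟨?_, ?_, ?_⟩
    · rw [Sum.elim_comp_inl]
      rw [Fintype.linearIndependent_iff]
      intro g hg
      have hsum : mulCoord a0 (∑ j, g j • B j) = 0 := by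
        rw [map_sum]
        simp_rw [map_smul]
        exact hg
      have hc : (∑ j, g j • B j) ∈ Ct :=
        Submodule.sum_mem _ fun j _ => Submodule.smul_mem _ _ (hBmem j)
      have hz : ∀ i ∈ S, (∑ j, g j • B j) i = 0 := by
        intro i hi
        have h1 := congrFun hsum i
        rw [mulCoord_apply] at h1
        simpa [ha0, hi] using h1
      have hceq : (∑ j, g j • B j) = 0 := hkillC _ hc hz
      exact fun j => Fintype.linearIndependent_iff.mp hBli g hceq j
    · rw [Sum.elim_comp_inr]
      exact hDli
    · rw [Sum.elim_comp_inl, Sum.elim_comp_inr]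
      have hv : Submodule.span E (Set.range fun j => mulCoord a0 (B j)) =
          Submodule.map (mulCoord a0) Ct := by
        have h1 : (fun j => mulCoord a0 (B j)) = (mulCoord a0) ∘ B := rfl
        rw [h1, Set.range_comp, Submodule.span_image, hBspan]
      rw [hv, hDspan, Submodule.disjoint_def]
      intro x hx1 hx2
      obtain ⟨c, hc, rfl⟩ := hx1
      apply hkillD _ hx2
      intro i hi
      rw [mulCoord_apply]
      simp [ha0, hi]
  obtain ⟨a, hane, hLI⟩ := acp_exists_good_scaling h3 hkd B D a0 h0
  -- E-linear consequences
  have hva : Submodule.span E (Set.range fun j => mulCoord a (B j)) =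
      Submodule.map (mulCoord a) Ct := by
    have h1 : (fun j => mulCoord a (B j)) = (mulCoord a) ∘ B := rfl
    rw [h1, Set.range_comp, Submodule.span_image, hBspan]
  have hcard : Fintype.card (Fin k ⊕ Fin d) = Module.finrank E (Fin n → E) := by
    simp [hkd]
  haveI hne : Nonempty (Fin k ⊕ Fin d) := by
    rcases Nat.eq_zero_or_pos k with hk | hk
    · exact ⟨Sum.inr ⟨0, by omega⟩⟩
    · exact ⟨Sum.inl ⟨0, hk⟩⟩
  have htop : Submodule.span E (Set.range (Sum.elim (fun j => mulCoord a (B j)) D)) = ⊤ := by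
    have h1 := (basisOfLinearIndependentOfCardEqFinrank hLI hcard).span_eq
    rwa [coe_basisOfLinearIndependentOfCardEqFinrank] at h1
  have hsup : Submodule.map (mulCoord a) Ct ⊔ Dt = ⊤ := by
    rw [← hva, ← hDspan, ← Submodule.span_union, ← Set.Sum.elim_range]
    exact htop
  have hinf : Submodule.map (mulCoord a) Ct ⊓ Dt = ⊥ := by
    obtain ⟨-, -, hdisj⟩ := linearIndependent_sum.mp hLI
    rw [Sum.elim_comp_inl, Sum.elim_comp_inr, hva, hDspan] at hdisj
    exact disjoint_iff.mp hdisj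
  -- transfer to F-linear statement
  refine ⟨a, hane, ?_, ?_⟩
  · rw [eq_bot_iff]
    intro x hx
    have hx1 : x ∈ Submodule.map (mulCoord a) Ct ⊓ Dt :=
      Submodule.mem_inf.mpr ⟨(Submodule.mem_inf.mp hx).1, (Submodule.mem_inf.mp hx).2⟩
    rw [hinf] at hx1
    simpa using hx1
  · rw [eq_top_iff]
    intro x _
    have hx1 : x ∈ Submodule.map (mulCoord a) Ct ⊔ Dt := by
      rw [hsup]
      trivial
    obtain ⟨y, hy, z, hz, rfl⟩ := Submodule.mem_sup.mp hx1
    exact Submodule.add_mem_sup hy hz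
end

section
/- For each i with 0 ≤ i ≤ m−1, let C_i be an F-linear code of length n over F of dimension k_i and D_i an F-linear code of length n of dimension n−k_i, and suppose each pair (C_i, D_i) is an LCP of codes over F (C_i ∩ D_i = {0} and C_i + D_i = F^n). Let α_0,…,α_{m−1} ∈ E be nonzero elements that are linearly independent over F. Then the pair (Σ_{i=0}^{m−1} α_i C_i, Σ_{i=0}^{m−1} α_i D_i), where α_i C_i = {α_i c : c ∈ C_i} ⊆ E^n and the sums are taken as F-subspaces of E^n, is an ACP of codes over E. -/
/-- The `F`-linear embedding `F^n → E^n`, `c ↦ (e·c_1, …, e·c_n)`; the image of a code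
`C ⊆ F^n` under it is the code `eC ⊆ E^n`. -/
noncomputable def scaledEmbed {F E : Type*} [Field F] [Field E] [Algebra F E] {n : ℕ}
    (e : E) : (Fin n → F) →ₗ[F] (Fin n → E) :=
  e • LinearMap.pi fun i => (Algebra.linearMap F E).comp (LinearMap.proj i)

lemma scaledEmbed_apply {F E : Type*} [Field F] [Field E] [Algebra F E] {n : ℕ}
    (e : E) (c : Fin n → F) (j : Fin n) :
    scaledEmbed e c j = e * algebraMap F E (c j) := by
  simp [scaledEmbed]

/-- given LCPs `(C_i, D_i)` of codes of length `n` over `F` with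
`dim C_i = k_i` and `dim D_i = n − k_i` for `0 ≤ i ≤ m−1`, and nonzero
`α_0, …, α_{m−1} ∈ E` linearly independent over `F`, the pair
`(Σ_i α_i C_i, Σ_i α_i D_i)` is an ACP of codes over `E`. -/
theorem isACP_of_LCP_family
    (F E : Type*) [Field F] [Field E] [Algebra F E] [Fintype F] [Fintype E]
    (q m : ℕ) (hq : Fintype.card F = q) (hm : 2 ≤ m) (hE : Fintype.card E = q ^ m)
    (hdeg : Module.finrank F E = m)
    (n : ℕ) (hn : 1 ≤ n)
    (C D : Fin m → Submodule F (Fin n → F)) (k : Fin m → ℕ)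
    (hC : ∀ i, Module.finrank F (C i) = k i)
    (hD : ∀ i, Module.finrank F (D i) = n - k i)
    (hLCP : ∀ i, C i ⊓ D i = ⊥ ∧ C i ⊔ D i = ⊤)
    (α : Fin m → E) (hα0 : ∀ i, α i ≠ 0) (hαli : LinearIndependent F α) :
    IsACP (⨆ i, Submodule.map (scaledEmbed (α i)) (C i))
      (⨆ i, Submodule.map (scaledEmbed (α i)) (D i)) := by
  classical
  have : Nonempty (Fin m) := ⟨⟨0, by omega⟩⟩
  have hcard : Fintype.card (Fin m) = Module.finrank F E := by simp [hdeg]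
  let b : Module.Basis (Fin m) F E := basisOfLinearIndependentOfCardEqFinrank hαli hcard
  have hb : ∀ i, b i = α i := fun i => by
    simp [b, coe_basisOfLinearIndependentOfCardEqFinrank]
  constructor
  · rw [eq_bot_iff]
    intro x hx
    rw [Submodule.mem_inf] at hx
    obtain ⟨hxC, hxD⟩ := hx
    rw [Submodule.mem_iSup_iff_exists_finsupp] at hxC hxD
    obtain ⟨f, hf, hfx⟩ := hxC
    obtain ⟨g, hg, hgx⟩ := hxD
    choose c hc hcf using fun i => hf i
    choose d hd hdf using fun i => hg i
    have hx1 : x = ∑ i, scaledEmbed (α i) (c i) := by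
      rw [← hfx, Finsupp.sum_fintype _ _ (fun _ => rfl)]
      exact Finset.sum_congr rfl fun i _ => (hcf i).symm
    have hx2 : x = ∑ i, scaledEmbed (α i) (d i) := by
      rw [← hgx, Finsupp.sum_fintype _ _ (fun _ => rfl)]
      exact Finset.sum_congr rfl fun i _ => (hdf i).symm
    have key : ∀ i, c i = d i := by
      intro i
      funext j
      have hsum : ∑ i', (c i' j - d i' j) • α i' = 0 := by
        have h1 : (∑ i', scaledEmbed (α i') (c i')) j
            = ∑ i', (c i' j) • α i' := by
          rw [Finset.sum_apply]
          exact Finset.sum_congr rfl fun i' _ => by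
            rw [scaledEmbed_apply, Algebra.smul_def, mul_comm]
        have h2 : (∑ i', scaledEmbed (α i') (d i')) j
            = ∑ i', (d i' j) • α i' := by
          rw [Finset.sum_apply]
          exact Finset.sum_congr rfl fun i' _ => by
            rw [scaledEmbed_apply, Algebra.smul_def, mul_comm]
        have := congrArg (fun y => y j) (hx1.symm.trans hx2)
        simp only [h1, h2] at this
        simp [sub_smul, Finset.sum_sub_distrib, this]
      have := Fintype.linearIndependent_iff.mp hαli _ hsum i
      exact sub_eq_zero.mp this
    have hc0 : ∀ i, c i = 0 := by
      intro i
      have : c i ∈ C i ⊓ D i := ⟨hc i, (key i) ▸ hd i⟩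
      rw [(hLCP i).1] at this
      simpa using this
    rw [hx1]
    simp [hc0]
  · rw [eq_top_iff]
    intro x _
    have hdecomp : ∀ i, ∃ ci ∈ C i, ∃ di ∈ D i, ci + di = (fun j => b.repr (x j) i) := by
      intro i
      have : (fun j => b.repr (x j) i) ∈ C i ⊔ D i := by
        rw [(hLCP i).2]; trivial
      exact Submodule.mem_sup.mp this
    choose c hc d hd hcd using hdecomp
    have hx : x = (∑ i, scaledEmbed (α i) (c i)) + (∑ i, scaledEmbed (α i) (d i)) := by
      funext j
      have : x j = ∑ i, b.repr (x j) i • α i := by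
        conv_lhs => rw [← b.sum_repr (x j)]
        exact Finset.sum_congr rfl fun i _ => by rw [hb]
      rw [Pi.add_apply, Finset.sum_apply, Finset.sum_apply, ← Finset.sum_add_distrib, this]
      refine Finset.sum_congr rfl fun i _ => ?_
      rw [scaledEmbed_apply, scaledEmbed_apply, ← mul_add, ← map_add]
      have : c i j + d i j = b.repr (x j) i := congrFun (hcd i) j
      rw [this, Algebra.smul_def, mul_comm]
    rw [hx]
    exact Submodule.add_mem_sup
      (Submodule.sum_mem _ fun i _ => Submodule.mem_iSup_of_mem i ⟨c i, hc i, rfl⟩)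
      (Submodule.sum_mem _ fun i _ => Submodule.mem_iSup_of_mem i ⟨d i, hd i, rfl⟩)
end

section
/- Let N be a positive integer coprime to q, and let i be an integer. If gcd(|C_i^{(q)}|, m) = 1, then C_i^{(q)} = C_i^{(q^m)}. -/
/-- The `b`-cyclotomic coset of `i` modulo `N`: `{i·b^j mod N : j ≥ 0} ⊆ ℤ/Nℤ`. -/
def cyclotomicCoset (N b : ℕ) (i : ℤ) : Set (ZMod N) :=
  {x | ∃ j : ℕ, x = (i : ZMod N) * (b : ZMod N) ^ j}

/-- let `q` be a prime power, `m ≥ 2`, `N` a positive integer coprime to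
`q`, and `i` an integer. If `gcd(|C_i^{(q)}|, m) = 1`, then `C_i^{(q)} = C_i^{(q^m)}`. -/
theorem cyclotomicCoset_eq_of_gcd_card_eq_one
    (q m : ℕ) (hq : IsPrimePow q) (hm : 2 ≤ m)
    (N : ℕ) (hN : 0 < N) (hNq : Nat.gcd N q = 1)
    (i : ℤ)
    (h : Nat.gcd ((cyclotomicCoset N q i).ncard) m = 1) :
    cyclotomicCoset N q i = cyclotomicCoset N (q ^ m) i := by
  haveI : NeZero N := ⟨hN.ne'⟩
  set c : ZMod N := (i : ZMod N) with hc
  set b : ZMod N := (q : ZMod N) with hbdef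
  have hb : IsUnit b := (ZMod.isUnit_iff_coprime q N).mpr (Nat.coprime_comm.mp hNq)
  set u : (ZMod N)ˣ := hb.unit with hu
  have hub : (u : ZMod N) = b := hb.unit_spec
  -- existence of a positive period
  have hex : ∃ t, 0 < t ∧ c * b ^ t = c := by
    refine ⟨orderOf u, orderOf_pos u, ?_⟩
    have : b ^ orderOf u = 1 := by
      rw [← hub, ← Units.val_pow_eq_pow_val, pow_orderOf_eq_one, Units.val_one]
    rw [this, mul_one]
  set d : ℕ := Nat.find hex with hd
  obtain ⟨hdpos, hdper⟩ : 0 < d ∧ c * b ^ d = c := Nat.find_spec hex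
  -- periodicity
  have hmul : ∀ s : ℕ, c * b ^ (d * s) = c := by
    intro s
    induction s with
    | zero => simp
    | succ s ih =>
      rw [Nat.mul_succ, pow_add, ← mul_assoc, ih, hdper]
  have hper : ∀ a : ℕ, c * b ^ a = c * b ^ (a % d) := by
    intro a
    conv_lhs => rw [← Nat.div_add_mod a d]
    rw [pow_add, ← mul_assoc, hmul]
  -- cancellation
  have hcancel : ∀ r s : ℕ, r < s → c * b ^ r = c * b ^ s → c * b ^ (s - r) = c := by
    intro r s hlt heq
    have h1 : c * b ^ (s - r) * b ^ r = c * b ^ r := by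
      rw [mul_assoc, ← pow_add]
      have : s - r + r = s := by omega
      rw [this, ← heq]
    exact (hb.pow r).mul_right_cancel (by rw [h1])
  -- injectivity on [0, d)
  have hinj : Function.Injective fun j : Fin d => c * b ^ (j : ℕ) := by
    intro r s hrs
    simp only at hrs
    by_contra hne
    have hne' : (r : ℕ) ≠ (s : ℕ) := fun e => hne (Fin.ext e)
    have hrd : (r : ℕ) < d := r.isLt
    have hsd : (s : ℕ) < d := s.isLt
    rcases lt_or_gt_of_ne hne' with hlt | hlt
    · exact Nat.find_min hex (show (s : ℕ) - r < d by omega)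
        ⟨by omega, hcancel _ _ hlt hrs⟩
    · exact Nat.find_min hex (show (r : ℕ) - s < d by omega)
        ⟨by omega, hcancel _ _ hlt hrs.symm⟩
  -- the coset equals the range of the injective map on Fin d
  have hset : cyclotomicCoset N q i = Set.range (fun j : Fin d => c * b ^ (j : ℕ)) := by
    ext x
    constructor
    · rintro ⟨j, rfl⟩
      exact ⟨⟨j % d, Nat.mod_lt _ hdpos⟩, (hper j).symm⟩
    · rintro ⟨j, rfl⟩
      exact ⟨(j : ℕ), rfl⟩
  have hcard : (cyclotomicCoset N q i).ncard = d := by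
    rw [hset, ← Set.image_univ, Set.ncard_image_of_injective _ hinj, Set.ncard_univ,
      Nat.card_eq_fintype_card, Fintype.card_fin]
  rw [hcard] at h
  have hcop : Nat.Coprime m d := Nat.coprime_comm.mp h
  obtain ⟨t, ht⟩ : ∃ t, Nat.totient d = t + 1 :=
    ⟨Nat.totient d - 1, (Nat.succ_pred_eq_of_pos (Nat.totient_pos.mpr hdpos)).symm⟩
  -- final equality
  ext x
  constructor
  · rintro ⟨j, rfl⟩
    refine ⟨j * m ^ t, ?_⟩
    have hmod : (m * (j * m ^ t)) % d = j % d := by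
      have h1 : m * (j * m ^ t) = j * m ^ (Nat.totient d) := by
        rw [ht, pow_succ]; ring
      have h2 : j * m ^ (Nat.totient d) ≡ j * 1 [MOD d] :=
        Nat.ModEq.mul_left j (Nat.ModEq.pow_totient hcop)
      rw [h1]
      exact (by simpa [Nat.mul_one] using h2 : j * m ^ (Nat.totient d) ≡ j [MOD d])
    have hbm : ((q : ZMod N) ^ m) ^ (j * m ^ t) = b ^ (m * (j * m ^ t)) := by
      rw [← pow_mul]
    push_cast
    rw [← hc, hbm, hper (m * _), hmod, ← hper]
  · rintro ⟨k, hk⟩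
    refine ⟨m * k, ?_⟩
    rw [hk]
    push_cast
    rw [← hc, pow_mul]
end

section
/- Let N be a positive integer coprime to q, and let i be an integer. If m divides |C_i^{(q)}|, then |C_i^{(q)}| = m·|C_i^{(q^m)}|, and C_i^{(q)} is the union of the q^m-cyclotomic cosets C_{i}^{(q^m)}, C_{iq}^{(q^m)}, …, C_{iq^{m−1}}^{(q^m)}, which are pairwise disjoint and all have the same cardinality. -/
private lemma key {N : ℕ} [NeZero N] (x u : ZMod N) (hu : IsUnit u) :
    ∃ n : ℕ, 0 < n ∧ ({y | ∃ j : ℕ, y = x * u ^ j} : Set (ZMod N)).ncard = n ∧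
      ∀ j k : ℕ, x * u ^ j = x * u ^ k ↔ j ≡ k [MOD n] := by
  have hex : ∃ d : ℕ, 0 < d ∧ x * u ^ d = x := by
    obtain ⟨j, k, hjk, he⟩ := Finite.exists_ne_map_eq_of_infinite (fun j : ℕ => x * u ^ j)
    rcases hjk.lt_or_gt with hlt | hlt
    · refine ⟨k - j, by omega, ?_⟩
      have h2 : x * u ^ (k - j) * u ^ j = x * u ^ j := by
        rw [mul_assoc, ← pow_add, Nat.sub_add_cancel hlt.le]; exact he.symm
      exact (hu.pow j).mul_right_cancel h2
    · refine ⟨j - k, by omega, ?_⟩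
      have h2 : x * u ^ (j - k) * u ^ k = x * u ^ k := by
        rw [mul_assoc, ← pow_add, Nat.sub_add_cancel hlt.le]; exact he
      exact (hu.pow k).mul_right_cancel h2
  classical
  set n := Nat.find hex with hn_def
  obtain ⟨hnpos, hnper⟩ := Nat.find_spec hex
  have hmin : ∀ d, d < n → ¬(0 < d ∧ x * u ^ d = x) := fun d hd => Nat.find_min hex hd
  have hper : ∀ j, x * u ^ (j % n) = x * u ^ j := by
    intro j
    induction j using Nat.strong_induction_on with
    | _ j ih =>
      rcases lt_or_ge j n with hlt | hle
      · rw [Nat.mod_eq_of_lt hlt]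
      · have hj : j = (j - n) + n := by omega
        rw [hj, Nat.add_mod_right, ih (j - n) (by omega), pow_add,
          show x * (u ^ (j - n) * u ^ n) = x * u ^ n * u ^ (j - n) from by ring, hnper]
  have base : ∀ r1 r2, r1 ≤ r2 → r2 < n → x * u ^ r1 = x * u ^ r2 → r1 = r2 := by
    intro r1 r2 h12 h2 he
    by_contra hne
    have hd : 0 < r2 - r1 := by omega
    have hx : x * u ^ (r2 - r1) = x := by
      have h3 : x * u ^ (r2 - r1) * u ^ r1 = x * u ^ r1 := by
        rw [mul_assoc, ← pow_add, Nat.sub_add_cancel h12]; exact he.symm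
      exact (hu.pow r1).mul_right_cancel h3
    exact hmin (r2 - r1) (by omega) ⟨hd, hx⟩
  have hchar : ∀ j k : ℕ, x * u ^ j = x * u ^ k ↔ j ≡ k [MOD n] := by
    intro j k
    constructor
    · intro he
      have h1 : x * u ^ (j % n) = x * u ^ (k % n) := by rw [hper, hper]; exact he
      have hj : j % n < n := Nat.mod_lt _ hnpos
      have hk : k % n < n := Nat.mod_lt _ hnpos
      rcases le_total (j % n) (k % n) with h2 | h2
      · exact base _ _ h2 hk h1
      · exact (base _ _ h2 hj h1.symm).symm
    · intro he
      rw [← hper j, ← hper k, he]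
  refine ⟨n, hnpos, ?_, hchar⟩
  have hSet : ({y | ∃ j : ℕ, y = x * u ^ j} : Set (ZMod N)) =
      ↑((Finset.range n).image fun j => x * u ^ j) := by
    ext y
    simp only [Finset.coe_image, Finset.coe_range, Set.mem_image, Set.mem_Iio,
      Set.mem_setOf_eq]
    constructor
    · rintro ⟨j, rfl⟩; exact ⟨j % n, Nat.mod_lt _ hnpos, hper j⟩
    · rintro ⟨j, _, rfl⟩; exact ⟨j, rfl⟩
  rw [hSet, Set.ncard_coe_finset, Finset.card_image_of_injOn, Finset.card_range]
  intro a ha b hb he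
  simp only [Finset.coe_range, Set.mem_Iio] at ha hb
  have h2 := (hchar a b).1 he
  have h3 : a % n = b % n := h2
  rwa [Nat.mod_eq_of_lt ha, Nat.mod_eq_of_lt hb] at h3

private lemma key2 {N : ℕ} [NeZero N] (x u : ZMod N) (hu : IsUnit u) (m c : ℕ) (hm : 0 < m)
    (hchar : ∀ j k : ℕ, x * u ^ j = x * u ^ k ↔ j ≡ k [MOD m * c]) (a : ℕ) :
    ({y | ∃ j : ℕ, y = x * u ^ a * (u ^ m) ^ j} : Set (ZMod N)).ncard = c := by
  obtain ⟨n', hn'pos, hcard', hchar'⟩ := key (x * u ^ a) (u ^ m) (hu.pow m)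
  have hcomb : ∀ j : ℕ, x * u ^ a * (u ^ m) ^ j = x * u ^ (a + m * j) := by
    intro j; rw [← pow_mul, mul_assoc, ← pow_add]
  have hiff : ∀ j : ℕ, n' ∣ j ↔ c ∣ j := by
    intro j
    have h1 := hchar' j 0
    rw [pow_zero, mul_one] at h1
    rw [Nat.modEq_zero_iff_dvd] at h1
    rw [← h1, hcomb, show x * u ^ a = x * u ^ (a + m * 0) from by rw [Nat.mul_zero, Nat.add_zero],
      hchar]
    constructor
    · intro h2
      have h3 : m * j ≡ m * 0 [MOD m * c] := Nat.ModEq.add_left_cancel' a h2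
      rw [Nat.mul_zero] at h3
      exact (mul_dvd_mul_iff_left hm.ne').1 (Nat.modEq_zero_iff_dvd.1 h3)
    · intro h2
      have h3 : m * j ≡ 0 [MOD m * c] := Nat.modEq_zero_iff_dvd.2 (mul_dvd_mul_left m h2)
      have h4 := Nat.ModEq.add_left a h3
      rw [Nat.mul_zero]
      exact h4
  have hne : n' = c := Nat.dvd_antisymm ((hiff c).2 dvd_rfl) ((hiff n').1 dvd_rfl)
  rw [← hne]; exact hcard'

/-- let `q` be a prime power, `m ≥ 2`, `N` a positive integer coprime to
`q`, and `i` an integer. If `m` divides `|C_i^{(q)}|`, then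
`|C_i^{(q)}| = m·|C_i^{(q^m)}|`, and `C_i^{(q)}` is the union of the `q^m`-cyclotomic
cosets `C_i^{(q^m)}, C_{iq}^{(q^m)}, …, C_{iq^{m−1}}^{(q^m)}`, which are pairwise
disjoint and all have the same cardinality. -/
theorem cyclotomicCoset_decomposition_of_dvd_card
    (q m : ℕ) (hq : IsPrimePow q) (hm : 2 ≤ m)
    (N : ℕ) (hN : 0 < N) (hNq : Nat.gcd N q = 1)
    (i : ℤ)
    (h : m ∣ (cyclotomicCoset N q i).ncard) :
    (cyclotomicCoset N q i).ncard = m * (cyclotomicCoset N (q ^ m) i).ncard ∧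
    cyclotomicCoset N q i =
      ⋃ j ∈ Finset.range m, cyclotomicCoset N (q ^ m) (i * (q : ℤ) ^ j) ∧
    (∀ j1 ∈ Finset.range m, ∀ j2 ∈ Finset.range m, j1 ≠ j2 →
      Disjoint (cyclotomicCoset N (q ^ m) (i * (q : ℤ) ^ j1))
        (cyclotomicCoset N (q ^ m) (i * (q : ℤ) ^ j2))) ∧
    (∀ j ∈ Finset.range m,
      (cyclotomicCoset N (q ^ m) (i * (q : ℤ) ^ j)).ncard =
        (cyclotomicCoset N (q ^ m) i).ncard) := by
  haveI : NeZero N := ⟨hN.ne'⟩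
  set x : ZMod N := (i : ZMod N) with hx
  set u : ZMod N := (q : ZMod N) with hu_def
  have hu : IsUnit u := by
    rw [hu_def, ZMod.isUnit_iff_coprime]
    exact (Nat.coprime_comm.mp hNq)
  have hm0 : 0 < m := by omega
  have hC : cyclotomicCoset N q i = {y | ∃ j : ℕ, y = x * u ^ j} := rfl
  have hCa : ∀ a : ℕ, cyclotomicCoset N (q ^ m) (i * (q : ℤ) ^ a) =
      {y | ∃ j : ℕ, y = x * u ^ a * (u ^ m) ^ j} := by
    intro a
    unfold cyclotomicCoset
    ext y
    simp only [Set.mem_setOf_eq]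
    constructor
    · rintro ⟨j, rfl⟩
      exact ⟨j, by push_cast; ring⟩
    · rintro ⟨j, rfl⟩
      exact ⟨j, by push_cast; ring⟩
  have hC0 : cyclotomicCoset N (q ^ m) i = {y | ∃ j : ℕ, y = x * u ^ 0 * (u ^ m) ^ j} := by
    have h1 := hCa 0
    rwa [show i * (q : ℤ) ^ 0 = i from by ring] at h1
  obtain ⟨n, hnpos, hcard, hchar⟩ := key x u hu
  rw [hC, hcard] at h
  obtain ⟨c, hc⟩ := h
  subst hc
  have hcards : ∀ a : ℕ, (cyclotomicCoset N (q ^ m) (i * (q : ℤ) ^ a)).ncard = c := by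
    intro a
    rw [hCa a]
    exact key2 x u hu m c hm0 hchar a
  have hcard0 : (cyclotomicCoset N (q ^ m) i).ncard = c := by
    rw [hC0]
    exact key2 x u hu m c hm0 hchar 0
  refine ⟨?_, ?_, ?_, ?_⟩
  · rw [hC, hcard, hcard0]
  · rw [hC]
    ext y
    simp only [Set.mem_iUnion, hCa, Set.mem_setOf_eq, Finset.mem_range]
    constructor
    · rintro ⟨j, rfl⟩
      refine ⟨j % m, Nat.mod_lt _ hm0, j / m, ?_⟩
      rw [← pow_mul, mul_assoc, ← pow_add]
      congr 2
      exact (Nat.mod_add_div j m).symm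
    · rintro ⟨a, ha, j, rfl⟩
      exact ⟨a + m * j, by rw [← pow_mul, mul_assoc, ← pow_add]⟩
  · intro j1 hj1 j2 hj2 hne
    rw [Finset.mem_range] at hj1 hj2
    rw [Set.disjoint_left]
    rintro y hy1 hy2
    rw [hCa] at hy1 hy2
    obtain ⟨t1, rfl⟩ := hy1
    obtain ⟨t2, he⟩ := hy2
    rw [← pow_mul, mul_assoc, ← pow_add, ← pow_mul u m t2, mul_assoc, ← pow_add] at he
    have h2 := (hchar _ _).1 he
    have h3 := Nat.ModEq.of_dvd (dvd_mul_right m c) h2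
    have h4 : (j1 + m * t1) % m = (j2 + m * t2) % m := h3
    rw [Nat.add_mul_mod_self_left, Nat.add_mul_mod_self_left] at h4
    rw [Nat.mod_eq_of_lt hj1, Nat.mod_eq_of_lt hj2] at h4
    exact hne h4
  · intro j hj
    rw [hcards j, hcard0]
end
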